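/- arXiv:2006.15267 — 4 statements merged into one kernel-verified Lean document; each statement's English description precedes it below -/
import Mathlib

section
/- Let (H, β) be a Hom-Hopf algebra with β bijective and antipode S bijective. For right-right Yetter-Drinfel'd modules V, W with bijective structure maps, the braiding c_{V,W}(v ⊗ w) = ζ_W^{-1}(w_{(0)}) ⊗ ζ_V^{-1}(v) ◁ β^{-2}(w_{(1)}) is bijective with inverse c_{V,W}^{-1}(w ⊗ v) = ζ_V^{-1}(v) ◁ S^{-1}β^{-2}(w_{(1)}) ⊗ ζ_W^{-1}(w_{(0)}). -/
open TensorProduct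

namespace HomHopf

variable (k : Type) [Field k]

/-- A Hom-algebra. -/
structure HomAlg (A : Type) [AddCommGroup A] [Module k A] : Type where
  mul : A →ₗ[k] A →ₗ[k] A
  one : A
  zmap : A →ₗ[k] A
  zmap_mul : ∀ a b, zmap (mul a b) = mul (zmap a) (zmap b)
  hom_assoc : ∀ a b c, mul (zmap a) (mul b c) = mul (mul a b) (zmap c)
  zmap_one : zmap one = one
  one_mul : ∀ a, mul one a = zmap a
  mul_one : ∀ a, mul a one = zmap a

/-- A Hom-bialgebra. -/
structure Bialg (H : Type) [AddCommGroup H] [Module k H] : Type where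
  mul : H →ₗ[k] H →ₗ[k] H
  one : H
  comul : H →ₗ[k] H ⊗[k] H
  counit : H →ₗ[k] k
  bmap : H →ₗ[k] H
  bmap_mul : ∀ a b, bmap (mul a b) = mul (bmap a) (bmap b)
  hom_assoc : ∀ a b c, mul (bmap a) (mul b c) = mul (mul a b) (bmap c)
  bmap_one : bmap one = one
  one_mul : ∀ a, mul one a = bmap a
  mul_one : ∀ a, mul a one = bmap a
  comul_bmap : ∀ c, comul (bmap c) = TensorProduct.map bmap bmap (comul c)
  coassoc : ∀ c, TensorProduct.map bmap comul (comul c)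
      = TensorProduct.assoc k H H H (TensorProduct.map comul bmap (comul c))
  counit_bmap : ∀ c, counit (bmap c) = counit c
  counit_comul : ∀ c,
      TensorProduct.lid k H (TensorProduct.map counit LinearMap.id (comul c)) = bmap c
  comul_counit : ∀ c,
      TensorProduct.rid k H (TensorProduct.map LinearMap.id counit (comul c)) = bmap c
  comul_mul : ∀ a b, comul (mul a b) = TensorProduct.map₂ mul mul (comul a) (comul b)
  comul_one : comul one = one ⊗ₜ[k] one
  counit_mul : ∀ a b, counit (mul a b) = counit a * counit b
  counit_one : counit one = 1

/-- A Hom-Hopf algebra. -/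
structure Hopf (H : Type) [AddCommGroup H] [Module k H] extends Bialg k H where
  S : H →ₗ[k] H
  S_mul_id : ∀ h,
      TensorProduct.lift mul (TensorProduct.map S LinearMap.id (comul h)) = counit h • one
  id_mul_S : ∀ h,
      TensorProduct.lift mul (TensorProduct.map LinearMap.id S (comul h)) = counit h • one
  S_bmap : ∀ h, S (bmap h) = bmap (S h)

variable {H : Type} [AddCommGroup H] [Module k H]
variable {M N P V W U : Type}
  [AddCommGroup M] [Module k M] [AddCommGroup N] [Module k N]
  [AddCommGroup P] [Module k P] [AddCommGroup V] [Module k V]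
  [AddCommGroup W] [Module k W] [AddCommGroup U] [Module k U]

/-- Left Hom-module. -/
structure IsLMod (A : Bialg k H) (ζ : M →ₗ[k] M) (act : H →ₗ[k] M →ₗ[k] M) : Prop where
  assoc : ∀ a b m, act (A.bmap a) (act b m) = act (A.mul a b) (ζ m)
  zeta_act : ∀ a m, ζ (act a m) = act (A.bmap a) (ζ m)
  one_act : ∀ m, act A.one m = ζ m

/-- Right Hom-module. -/
structure IsRMod (A : Bialg k H) (ζ : M →ₗ[k] M) (ract : M →ₗ[k] H →ₗ[k] M) : Prop where
  assoc : ∀ m a b, ract (ract m a) (A.bmap b) = ract (ζ m) (A.mul a b)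
  zeta_act : ∀ m a, ζ (ract m a) = ract (ζ m) (A.bmap a)
  act_one : ∀ m, ract m A.one = ζ m

/-- Left Hom-module over a plain Hom-algebra structure (given by raw data). -/
structure IsLModOf {A : Type} [AddCommGroup A] [Module k A]
    (mul : A →ₗ[k] A →ₗ[k] A) (one : A) (zmap : A →ₗ[k] A)
    (ζ : M →ₗ[k] M) (act : A →ₗ[k] M →ₗ[k] M) : Prop where
  assoc : ∀ a b m, act (zmap a) (act b m) = act (mul a b) (ζ m)
  zeta_act : ∀ a m, ζ (act a m) = act (zmap a) (ζ m)
  one_act : ∀ m, act one m = ζ m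

/-- Right Hom-module over a plain Hom-algebra structure. -/
structure IsRModOf {A : Type} [AddCommGroup A] [Module k A]
    (mul : A →ₗ[k] A →ₗ[k] A) (one : A) (zmap : A →ₗ[k] A)
    (ζ : M →ₗ[k] M) (ract : M →ₗ[k] A →ₗ[k] M) : Prop where
  assoc : ∀ m a b, ract (ract m a) (zmap b) = ract (ζ m) (mul a b)
  zeta_act : ∀ m a, ζ (ract m a) = ract (ζ m) (zmap a)
  act_one : ∀ m, ract m one = ζ m

/-- Left Hom-comodule. -/
structure IsLCom (A : Bialg k H) (ζ : M →ₗ[k] M) (ρ : M →ₗ[k] H ⊗[k] M) : Prop where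
  coact_zeta : ∀ m, ρ (ζ m) = TensorProduct.map A.bmap ζ (ρ m)
  counit_coact : ∀ m, TensorProduct.lid k M (TensorProduct.map A.counit LinearMap.id (ρ m)) = ζ m
  coassoc : ∀ m, TensorProduct.map A.bmap ρ (ρ m)
      = TensorProduct.assoc k H H M (TensorProduct.map A.comul ζ (ρ m))

/-- Right Hom-comodule. -/
structure IsRCom (A : Bialg k H) (ζ : M →ₗ[k] M) (ρ : M →ₗ[k] M ⊗[k] H) : Prop where
  coact_zeta : ∀ m, ρ (ζ m) = TensorProduct.map ζ A.bmap (ρ m)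
  coact_counit : ∀ m, TensorProduct.rid k M (TensorProduct.map LinearMap.id A.counit (ρ m)) = ζ m
  coassoc : ∀ m, TensorProduct.map ρ A.bmap (ρ m)
      = (TensorProduct.assoc k M H H).symm (TensorProduct.map ζ A.comul (ρ m))

/-- `(h·m)_{[-1]} ⊗ (h·m)_{[0]} = h_1 m_{[-1]} ⊗ h_2 · m_{[0]}`. -/
def LLcompat (A : Bialg k H) (act : H →ₗ[k] M →ₗ[k] M) (ρ : M →ₗ[k] H ⊗[k] M) : Prop :=
  ∀ h m, ρ (act h m) = TensorProduct.map₂ A.mul act (A.comul h) (ρ m)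

/-- `(h·m)_{(0)} ⊗ (h·m)_{(1)} = h_1 · m_{(0)} ⊗ h_2 m_{(1)}`. -/
def LRcompat (A : Bialg k H) (act : H →ₗ[k] M →ₗ[k] M) (ρ : M →ₗ[k] M ⊗[k] H) : Prop :=
  ∀ h m, ρ (act h m) = TensorProduct.map₂ act A.mul (A.comul h) (ρ m)

/-- `(m·h)_{[-1]} ⊗ (m·h)_{[0]} = m_{[-1]} h_1 ⊗ m_{[0]} · h_2`. -/
def RLcompat (A : Bialg k H) (ract : M →ₗ[k] H →ₗ[k] M) (ρ : M →ₗ[k] H ⊗[k] M) : Prop :=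
  ∀ m h, ρ (ract m h) = TensorProduct.map₂ A.mul ract (ρ m) (A.comul h)

/-- `(m·h)_{(0)} ⊗ (m·h)_{(1)} = m_{(0)} · h_1 ⊗ m_{(1)} h_2`. -/
def RRcompat (A : Bialg k H) (ract : M →ₗ[k] H →ₗ[k] M) (ρ : M →ₗ[k] M ⊗[k] H) : Prop :=
  ∀ m h, ρ (ract m h) = TensorProduct.map₂ ract A.mul (ρ m) (A.comul h)

/-- Four-angle H-Hopf module. -/
structure IsFourAngle (A : Hopf k H) (ζ : M →ₗ[k] M)
    (lact : H →ₗ[k] M →ₗ[k] M) (ract : M →ₗ[k] H →ₗ[k] M)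
    (ρl : M →ₗ[k] H ⊗[k] M) (ρr : M →ₗ[k] M ⊗[k] H) : Prop where
  lmod : IsLMod k A.toBialg ζ lact
  rmod : IsRMod k A.toBialg ζ ract
  bimod : ∀ a m b, lact (A.bmap a) (ract m b) = ract (lact a m) (A.bmap b)
  lcom : IsLCom k A.toBialg ζ ρl
  rcom : IsRCom k A.toBialg ζ ρr
  bicom : ∀ m, TensorProduct.map A.bmap ρr (ρl m)
      = TensorProduct.assoc k H M H (TensorProduct.map ρl A.bmap (ρr m))
  cll : LLcompat k A.toBialg lact ρl
  clr : LRcompat k A.toBialg lact ρr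
  crl : RLcompat k A.toBialg ract ρl
  crr : RRcompat k A.toBialg ract ρr

/-- Yetter–Drinfel'd compatibility, stated via arbitrary finite representations of `Δ(h)`. -/
def ydCompat (A : Bialg k H) (ract : V →ₗ[k] H →ₗ[k] V) (ρ : V →ₗ[k] V ⊗[k] H) : Prop :=
  ∀ (v : V) (h : H) (ι : Type) (s : Finset ι) (h1 h2 : ι → H),
    A.comul h = ∑ i ∈ s, h1 i ⊗ₜ[k] h2 i →
    ∑ i ∈ s, TensorProduct.map LinearMap.id (A.mul (A.bmap (A.bmap (h1 i))))
        (ρ (ract v (h2 i)))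
      = ∑ i ∈ s, TensorProduct.map (ract.flip (A.bmap (h1 i)))
          (((A.mul.flip (A.bmap (A.bmap (h2 i)))).comp A.bmap)) (ρ v)

/-- Right-right Yetter–Drinfel'd module. -/
structure IsYD (A : Hopf k H) (ζ : V →ₗ[k] V)
    (ract : V →ₗ[k] H →ₗ[k] V) (ρ : V →ₗ[k] V ⊗[k] H) : Prop where
  rmod : IsRMod k A.toBialg ζ ract
  rcom : IsRCom k A.toBialg ζ ρ
  compat : ydCompat k A.toBialg ract ρ

/-- The braiding `c_{V,W}(v ⊗ w) = ζ_W⁻¹(w_(0)) ⊗ ζ_V⁻¹(v) ◁ β⁻²(w_(1))`. -/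
noncomputable def braid (ract : V →ₗ[k] H →ₗ[k] V) (ζVinv : V →ₗ[k] V)
    (ρ : W →ₗ[k] W ⊗[k] H) (ζWinv : W →ₗ[k] W) (βinv : H →ₗ[k] H) :
    V ⊗[k] W →ₗ[k] W ⊗[k] V :=
  (TensorProduct.map LinearMap.id (TensorProduct.lift (ract.comp ζVinv))).comp
    ((TensorProduct.leftComm k V W H).toLinearMap.comp
      (TensorProduct.map LinearMap.id ((TensorProduct.map ζWinv (βinv.comp βinv)).comp ρ)))

/-- The action on the tensor product of two YD modules:
`(v ⊗ w) ◁ h = v ◁ β⁻¹(h_1) ⊗ w ◁ β⁻¹(h_2)`. -/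
noncomputable def ydAct (A : Bialg k H) (βinv : H →ₗ[k] H)
    (ractV : V →ₗ[k] H →ₗ[k] V) (ractW : W →ₗ[k] H →ₗ[k] W) :
    V ⊗[k] W →ₗ[k] H →ₗ[k] V ⊗[k] W :=
  (TensorProduct.map₂ ractV ractW).compl₂ ((TensorProduct.map βinv βinv).comp A.comul)

/-- The coaction on the tensor product of two YD modules:
`ρ(v ⊗ w) = v_(0) ⊗ w_(0) ⊗ β⁻¹(v_(1) w_(1))`. -/
noncomputable def ydCoact (A : Bialg k H) (βinv : H →ₗ[k] H)
    (ρV : V →ₗ[k] V ⊗[k] H) (ρW : W →ₗ[k] W ⊗[k] H) :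
    V ⊗[k] W →ₗ[k] (V ⊗[k] W) ⊗[k] H :=
  (TensorProduct.map LinearMap.id (βinv.comp (TensorProduct.lift A.mul))).comp
    ((TensorProduct.tensorTensorTensorComm k V H W H).toLinearMap.comp
      (TensorProduct.map ρV ρW))


/-- The inverse braiding `c⁻¹(w⊗v) = ζ_V⁻¹(v) ◁ S⁻¹β⁻²(w_(1)) ⊗ ζ_W⁻¹(w_(0))`. -/
noncomputable def braidInv {V W : Type} [AddCommGroup V] [Module k V]
    [AddCommGroup W] [Module k W]
    (ract : V →ₗ[k] H →ₗ[k] V) (ζVinv : V →ₗ[k] V)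
    (ρ : W →ₗ[k] W ⊗[k] H) (ζWinv : W →ₗ[k] W) (βinv Sinv : H →ₗ[k] H) :
    W ⊗[k] V →ₗ[k] V ⊗[k] W :=
  (TensorProduct.map
      (TensorProduct.lift (((ract.comp ζVinv).flip).comp (Sinv.comp (βinv.comp βinv))))
      ζWinv).comp
    ((TensorProduct.comm k W (H ⊗[k] V)).toLinearMap.comp
      ((TensorProduct.assoc k W H V).toLinearMap.comp
        (TensorProduct.map ρ LinearMap.id)))

/-! ### Auxiliary lemmas -/

section Aux

variable {H₀ : Type} [AddCommGroup H₀] [Module k H₀]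

variable (A : Hopf k H₀) {βe Se : H₀ ≃ₗ[k] H₀}

lemma bmap_symm (hβ : βe.toLinearMap = A.bmap) (x : H₀) : A.bmap (βe.symm x) = x := by
  rw [← hβ]; exact βe.apply_symm_apply x

lemma symm_bmap (hβ : βe.toLinearMap = A.bmap) (x : H₀) : βe.symm (A.bmap x) = x := by
  rw [← hβ]; exact βe.symm_apply_apply x

lemma symm_one (hβ : βe.toLinearMap = A.bmap) : βe.symm A.one = A.one := by
  conv_lhs => rw [← A.bmap_one, symm_bmap k A hβ]

lemma symm_mul (hβ : βe.toLinearMap = A.bmap) (a b : H₀) :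
    βe.symm (A.mul a b) = A.mul (βe.symm a) (βe.symm b) := by
  have := A.bmap_mul (βe.symm a) (βe.symm b)
  rw [bmap_symm k A hβ, bmap_symm k A hβ] at this
  rw [← this, symm_bmap k A hβ]

lemma counit_symm (hβ : βe.toLinearMap = A.bmap) (x : H₀) :
    A.counit (βe.symm x) = A.counit x := by
  conv_rhs => rw [← bmap_symm k A hβ x, A.counit_bmap]

lemma map_symm_symm_bmap (hβ : βe.toLinearMap = A.bmap) (t : H₀ ⊗[k] H₀) :
    TensorProduct.map βe.symm.toLinearMap βe.symm.toLinearMap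
      (TensorProduct.map A.bmap A.bmap t) = t := by
  induction t with
  | zero => simp
  | tmul a b => simp [symm_bmap k A hβ]
  | add x y hx hy => simp [map_add, hx, hy]

lemma comul_symm (hβ : βe.toLinearMap = A.bmap) (x : H₀) :
    A.comul (βe.symm x) = TensorProduct.map βe.symm.toLinearMap βe.symm.toLinearMap
      (A.comul x) := by
  conv_rhs => rw [← bmap_symm k A hβ x, A.comul_bmap, map_symm_symm_bmap k A hβ]

lemma S_symm (hβ : βe.toLinearMap = A.bmap) (x : H₀) :
    A.S (βe.symm x) = βe.symm (A.S x) := by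
  have := A.S_bmap (βe.symm x)
  rw [bmap_symm k A hβ] at this
  rw [this, symm_bmap k A hβ]

lemma Sinv_bmap (hβ : βe.toLinearMap = A.bmap) (hS : Se.toLinearMap = A.S) (x : H₀) :
    Se.symm (A.bmap x) = A.bmap (Se.symm x) := by
  apply Se.injective
  have h1 : ∀ y, Se (Se.symm y) = y := fun y => Se.apply_symm_apply y
  have h2 : ∀ y, A.S (Se.symm y) = y := fun y => by rw [← hS]; exact h1 y
  calc Se (Se.symm (A.bmap x)) = A.bmap x := h1 _
    _ = A.bmap (A.S (Se.symm x)) := by rw [h2]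
    _ = A.S (A.bmap (Se.symm x)) := (A.S_bmap _).symm
    _ = Se (A.bmap (Se.symm x)) := by rw [← hS]; rfl

lemma Sinv_binv (hβ : βe.toLinearMap = A.bmap) (hS : Se.toLinearMap = A.S) (x : H₀) :
    Se.symm (βe.symm x) = βe.symm (Se.symm x) := by
  have := Sinv_bmap k A hβ hS (βe.symm x)
  rw [bmap_symm k A hβ] at this
  rw [this, symm_bmap k A hβ]

lemma S_one (hβ : βe.toLinearMap = A.bmap) : A.S A.one = A.one := by
  have := A.id_mul_S A.one
  rw [A.comul_one, A.counit_one, one_smul] at this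
  simp only [TensorProduct.map_tmul, LinearMap.id_coe, id_eq, TensorProduct.lift.tmul] at this
  rw [A.one_mul] at this
  calc A.S A.one = βe.symm (A.bmap (A.S A.one)) := (symm_bmap k A hβ _).symm
    _ = βe.symm A.one := by rw [this]
    _ = A.one := symm_one k A hβ

/-- `∑ ε(h₁) • h₂ = β h`. -/
lemma counit_left (h : H₀) :
    TensorProduct.lift ((LinearMap.lsmul k H₀).comp A.counit) (A.comul h) = A.bmap h := by
  have key : ∀ t : H₀ ⊗[k] H₀,
      TensorProduct.lift ((LinearMap.lsmul k H₀).comp A.counit) t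
        = TensorProduct.lid k H₀ (TensorProduct.map A.counit LinearMap.id t) := by
    intro t
    induction t with
    | zero => simp
    | tmul a b => simp
    | add x y hx hy => simp [map_add, hx, hy]
  rw [key, A.counit_comul]

/-- `∑ ε(h₂) • h₁ = β h`. -/
lemma counit_right (h : H₀) :
    TensorProduct.lift (((LinearMap.lsmul k H₀).comp A.counit).flip) (A.comul h)
      = A.bmap h := by
  have key : ∀ t : H₀ ⊗[k] H₀,
      TensorProduct.lift (((LinearMap.lsmul k H₀).comp A.counit).flip) t
        = TensorProduct.rid k H₀ (TensorProduct.map LinearMap.id A.counit t) := by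
    intro t
    induction t with
    | zero => simp
    | tmul a b => simp [TensorProduct.smul_tmul, TensorProduct.smul_tmul']
    | add x y hx hy => simp [map_add, hx, hy]
  rw [key, A.comul_counit]

lemma counit_S (hβ : βe.toLinearMap = A.bmap) (h : H₀) : A.counit (A.S h) = A.counit h := by
  obtain ⟨s, hs⟩ := TensorProduct.exists_finset (A.comul h)
  have h1 := A.S_mul_id h
  rw [hs] at h1
  simp only [map_sum, TensorProduct.map_tmul, LinearMap.id_coe, id_eq,
    TensorProduct.lift.tmul] at h1
  have h2 := congrArg A.counit h1
  simp only [map_sum, A.counit_mul, map_smul, A.counit_one, smul_eq_mul, mul_one] at h2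
  have h3 : ∑ p ∈ s, A.counit (A.S p.1) * A.counit p.2
      = A.counit (A.S (A.bmap h)) := by
    rw [← counit_right k A h, hs]
    simp only [map_sum, TensorProduct.lift.tmul, LinearMap.flip_apply, LinearMap.coe_comp,
      Function.comp_apply, LinearMap.lsmul_apply, map_smul, map_sum]
    refine Finset.sum_congr rfl fun p _ => ?_
    rw [smul_eq_mul, mul_comm]
  rw [h3, A.S_bmap, A.counit_bmap] at h2
  exact h2

end Aux
section Hopfid

variable {H₀ : Type} [AddCommGroup H₀] [Module k H₀]
variable (A : Hopf k H₀) {βe Se : H₀ ≃ₗ[k] H₀}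

/-- Componentwise multiplication on `H ⊗ H`. -/
noncomputable def mul2 : H₀ ⊗[k] H₀ →ₗ[k] H₀ ⊗[k] H₀ →ₗ[k] H₀ ⊗[k] H₀ :=
  TensorProduct.map₂ A.mul A.mul

@[simp] lemma mul2_tmul (a b c d : H₀) :
    mul2 k A (a ⊗ₜ[k] b) (c ⊗ₜ[k] d) = A.mul a c ⊗ₜ[k] A.mul b d := rfl

/-- `h ↦ ∑ S(h₂) ⊗ S(h₁)`. -/
noncomputable def sop : H₀ →ₗ[k] H₀ ⊗[k] H₀ :=
  (TensorProduct.comm k H₀ H₀).toLinearMap ∘ₗ TensorProduct.map A.S A.S ∘ₗ A.comul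

lemma sop_apply (x : H₀) :
    sop k A x = TensorProduct.comm k H₀ H₀ (TensorProduct.map A.S A.S (A.comul x)) := rfl

lemma comm_map_apply (f g : H₀ →ₗ[k] H₀) (t : H₀ ⊗[k] H₀) :
    TensorProduct.comm k H₀ H₀ (TensorProduct.map f g t)
      = TensorProduct.map g f (TensorProduct.comm k H₀ H₀ t) := by
  induction t with
  | zero => simp
  | tmul a b => simp
  | add x y hx hy => simp [map_add, hx, hy]

lemma map_map_comm (f g : H₀ →ₗ[k] H₀) (h : ∀ x, f (g x) = g (f x)) (t : H₀ ⊗[k] H₀) :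
    TensorProduct.map f f (TensorProduct.map g g t)
      = TensorProduct.map g g (TensorProduct.map f f t) := by
  induction t with
  | zero => simp
  | tmul a b => simp [h]
  | add x y hx hy => simp [map_add, hx, hy]

lemma sop_bmap (x : H₀) :
    sop k A (A.bmap x) = TensorProduct.map A.bmap A.bmap (sop k A x) := by
  rw [sop_apply, sop_apply, A.comul_bmap,
    map_map_comm k A.S A.bmap (fun y => A.S_bmap y), comm_map_apply]

lemma mul2_one_right (t : H₀ ⊗[k] H₀) :
    mul2 k A t (A.one ⊗ₜ[k] A.one) = TensorProduct.map A.bmap A.bmap t := by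
  induction t with
  | zero => simp
  | tmul a b => simp [A.mul_one]
  | add x y hx hy => simp [map_add, hx, hy]

lemma mul2_one_left (t : H₀ ⊗[k] H₀) :
    mul2 k A (A.one ⊗ₜ[k] A.one) t = TensorProduct.map A.bmap A.bmap t := by
  induction t with
  | zero => simp
  | tmul a b => simp [A.one_mul]
  | add x y hx hy => simp [map_add, hx, hy]

lemma mul2_hom_assoc (u v w : H₀ ⊗[k] H₀) :
    mul2 k A (TensorProduct.map A.bmap A.bmap u) (mul2 k A v w)
      = mul2 k A (mul2 k A u v) (TensorProduct.map A.bmap A.bmap w) := by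
  induction u with
  | zero => simp
  | add x y hx hy => simp [map_add, hx, hy, LinearMap.add_apply]
  | tmul a b =>
    induction v with
    | zero => simp
    | add x y hx hy =>
      simp only [mul2_tmul, TensorProduct.map_tmul] at hx hy
      simp [map_add, hx, hy, LinearMap.add_apply]
    | tmul c d =>
      induction w with
      | zero => simp
      | add x y hx hy =>
        simp only [mul2_tmul, TensorProduct.map_tmul] at hx hy
        simp [map_add, hx, hy]
      | tmul e f => simp [A.hom_assoc]

lemma map_id_binv_comul_bmap (hβ : βe.toLinearMap = A.bmap) (t : H₀ ⊗[k] H₀) :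
    TensorProduct.map LinearMap.id βe.symm.toLinearMap
      (TensorProduct.map A.comul A.bmap t) = TensorProduct.map A.comul LinearMap.id t := by
  induction t with
  | zero => simp
  | tmul a b => simp [symm_bmap k A hβ]
  | add x y hx hy => simp [map_add, hx, hy]

lemma map_binv_id_bmap_comul (hβ : βe.toLinearMap = A.bmap) (t : H₀ ⊗[k] H₀) :
    TensorProduct.map βe.symm.toLinearMap LinearMap.id
      (TensorProduct.map A.bmap A.comul t) = TensorProduct.map LinearMap.id A.comul t := by
  induction t with
  | zero => simp
  | tmul a b => simp [symm_bmap k A hβ]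
  | add x y hx hy => simp [map_add, hx, hy]

lemma map_comul_id_eq (hβ : βe.toLinearMap = A.bmap) (g : H₀) :
    TensorProduct.map A.comul LinearMap.id (A.comul g)
      = TensorProduct.map LinearMap.id βe.symm.toLinearMap
          ((TensorProduct.assoc k H₀ H₀ H₀).symm
            (TensorProduct.map A.bmap A.comul (A.comul g))) := by
  rw [A.coassoc g, LinearEquiv.symm_apply_apply, map_id_binv_comul_bmap k A hβ]

lemma map_id_comul_eq (hβ : βe.toLinearMap = A.bmap) (g : H₀) :
    TensorProduct.map LinearMap.id A.comul (A.comul g)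
      = TensorProduct.map βe.symm.toLinearMap LinearMap.id
          (TensorProduct.assoc k H₀ H₀ H₀
            (TensorProduct.map A.comul A.bmap (A.comul g))) := by
  rw [← A.coassoc g, map_binv_id_bmap_comul k A hβ]

lemma S_mul_id_sum (g : H₀) {ι : Type} (s : Finset ι) (f₁ f₂ : ι → H₀)
    (hrep : A.comul g = ∑ i ∈ s, f₁ i ⊗ₜ[k] f₂ i) :
    ∑ i ∈ s, A.mul (A.S (f₁ i)) (f₂ i) = A.counit g • A.one := by
  have := A.S_mul_id g
  rw [hrep] at this
  simpa using this

lemma id_mul_S_sum (g : H₀) {ι : Type} (s : Finset ι) (f₁ f₂ : ι → H₀)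
    (hrep : A.comul g = ∑ i ∈ s, f₁ i ⊗ₜ[k] f₂ i) :
    ∑ i ∈ s, A.mul (f₁ i) (A.S (f₂ i)) = A.counit g • A.one := by
  have := A.id_mul_S g
  rw [hrep] at this
  simpa using this

lemma counit_left_sum (g : H₀) {ι : Type} (s : Finset ι) (f₁ f₂ : ι → H₀)
    (hrep : A.comul g = ∑ i ∈ s, f₁ i ⊗ₜ[k] f₂ i) :
    ∑ i ∈ s, A.counit (f₁ i) • f₂ i = A.bmap g := by
  have := counit_left k A g
  rw [hrep] at this
  simpa using this

lemma counit_right_sum (g : H₀) {ι : Type} (s : Finset ι) (f₁ f₂ : ι → H₀)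
    (hrep : A.comul g = ∑ i ∈ s, f₁ i ⊗ₜ[k] f₂ i) :
    ∑ i ∈ s, A.counit (f₂ i) • f₁ i = A.bmap g := by
  have := counit_right k A g
  rw [hrep] at this
  simpa using this

end Hopfid
section MainId

variable {H₀ : Type} [AddCommGroup H₀] [Module k H₀]
variable (A : Hopf k H₀) {βe Se : H₀ ≃ₗ[k] H₀}

lemma step1 (g : H₀) {ι : Type} (s : Finset ι) (f₁ f₂ : ι → H₀)
    (hrep : A.comul g = ∑ i ∈ s, f₁ i ⊗ₜ[k] f₂ i) :
    ∑ i ∈ s, mul2 k A (A.comul (f₁ i)) (A.comul (A.S (f₂ i)))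
      = A.counit g • (A.one ⊗ₜ[k] A.one) := by
  calc ∑ i ∈ s, mul2 k A (A.comul (f₁ i)) (A.comul (A.S (f₂ i)))
      = ∑ i ∈ s, A.comul (A.mul (f₁ i) (A.S (f₂ i))) :=
        Finset.sum_congr rfl fun i _ => (A.comul_mul _ _).symm
    _ = A.comul (∑ i ∈ s, A.mul (f₁ i) (A.S (f₂ i))) := (map_sum _ _ _).symm
    _ = A.comul (A.counit g • A.one) := by rw [id_mul_S_sum k A g s f₁ f₂ hrep]
    _ = A.counit g • (A.one ⊗ₜ[k] A.one) := by rw [map_smul, A.comul_one]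

lemma step2aux (hβ : βe.toLinearMap = A.bmap) (x g : H₀) {ι : Type} (s : Finset ι)
    (f₁ f₂ : ι → H₀) (hrep : A.comul g = ∑ i ∈ s, f₁ i ⊗ₜ[k] f₂ i) :
    ∑ i ∈ s, mul2 k A (A.S (f₁ i) ⊗ₜ[k] x)
        (TensorProduct.map βe.symm.toLinearMap βe.symm.toLinearMap (A.comul (f₂ i)))
      = A.one ⊗ₜ[k] A.mul x (A.bmap g) := by
  classical
  choose F hF using fun y : H₀ => TensorProduct.exists_finset (A.comul y)
  set βi := βe.symm.toLinearMap with hβidef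
  set Θ : H₀ ⊗[k] (H₀ ⊗[k] H₀) →ₗ[k] H₀ ⊗[k] H₀ :=
    TensorProduct.lift (mul2 k A) ∘ₗ
      TensorProduct.map ((TensorProduct.mk k H₀ H₀).flip x ∘ₗ A.S)
        (TensorProduct.map βi βi) with hΘdef
  have hΘt : ∀ (a : H₀) (u : H₀ ⊗[k] H₀),
      Θ (a ⊗ₜ[k] u) = mul2 k A (A.S a ⊗ₜ[k] x) (TensorProduct.map βi βi u) := by
    intro a u
    simp [hΘdef, TensorProduct.map_tmul]
  have harg : TensorProduct.map LinearMap.id A.comul (A.comul g)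
      = ∑ i ∈ s, ∑ p ∈ F (f₁ i), βi p.1 ⊗ₜ[k] (p.2 ⊗ₜ[k] A.bmap (f₂ i)) := by
    rw [map_id_comul_eq k A hβ g]
    have h2 : TensorProduct.map A.comul A.bmap (A.comul g)
        = ∑ i ∈ s, ∑ p ∈ F (f₁ i), (p.1 ⊗ₜ[k] p.2) ⊗ₜ[k] A.bmap (f₂ i) := by
      rw [hrep, map_sum]
      refine Finset.sum_congr rfl fun i _ => ?_
      rw [TensorProduct.map_tmul, hF (f₁ i), TensorProduct.sum_tmul]
    rw [h2]
    simp [TensorProduct.assoc_tmul, hβidef]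
  have hL : ∑ i ∈ s, mul2 k A (A.S (f₁ i) ⊗ₜ[k] x)
        (TensorProduct.map βi βi (A.comul (f₂ i)))
      = Θ (TensorProduct.map LinearMap.id A.comul (A.comul g)) := by
    rw [hrep, map_sum, map_sum]
    refine Finset.sum_congr rfl fun i _ => ?_
    rw [TensorProduct.map_tmul, hΘt]
    rfl
  rw [hL, harg]
  have hterm : ∀ i ∈ s, ∀ p ∈ F (f₁ i),
      Θ (βi p.1 ⊗ₜ[k] (p.2 ⊗ₜ[k] A.bmap (f₂ i)))
        = A.mul (A.S (βi p.1)) (βi p.2) ⊗ₜ[k] A.mul x (f₂ i) := by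
    intro i _ p _
    rw [hΘt, TensorProduct.map_tmul, mul2_tmul]
    have : βi (A.bmap (f₂ i)) = f₂ i := symm_bmap k A hβ _
    rw [this]
  calc Θ (∑ i ∈ s, ∑ p ∈ F (f₁ i), βi p.1 ⊗ₜ[k] (p.2 ⊗ₜ[k] A.bmap (f₂ i)))
      = ∑ i ∈ s, ∑ p ∈ F (f₁ i),
          A.mul (A.S (βi p.1)) (βi p.2) ⊗ₜ[k] A.mul x (f₂ i) := by
        rw [map_sum]
        exact Finset.sum_congr rfl fun i hi => by
          rw [map_sum]
          exact Finset.sum_congr rfl fun p hp => hterm i hi p hp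
    _ = ∑ i ∈ s, (∑ p ∈ F (f₁ i), A.mul (A.S (βi p.1)) (βi p.2)) ⊗ₜ[k] A.mul x (f₂ i) := by
        refine Finset.sum_congr rfl fun i _ => ?_
        rw [TensorProduct.sum_tmul]
    _ = ∑ i ∈ s, (A.counit (f₁ i) • A.one) ⊗ₜ[k] A.mul x (f₂ i) := by
        refine Finset.sum_congr rfl fun i _ => ?_
        congr 1
        have h1 : ∀ p : H₀ × H₀, A.mul (A.S (βi p.1)) (βi p.2)
            = βi (A.mul (A.S p.1) p.2) := by
          intro p
          simp only [hβidef, LinearEquiv.coe_coe]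
          rw [S_symm k A hβ, ← symm_mul k A hβ]
        calc ∑ p ∈ F (f₁ i), A.mul (A.S (βi p.1)) (βi p.2)
            = ∑ p ∈ F (f₁ i), βi (A.mul (A.S p.1) p.2) :=
              Finset.sum_congr rfl fun p _ => h1 p
          _ = βi (∑ p ∈ F (f₁ i), A.mul (A.S p.1) p.2) := (map_sum _ _ _).symm
          _ = βi (A.counit (f₁ i) • A.one) := by
              rw [S_mul_id_sum k A (f₁ i) (F (f₁ i)) _ _ (hF (f₁ i))]
          _ = A.counit (f₁ i) • A.one := by
              rw [map_smul]
              congr 1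
              exact symm_one k A hβ
    _ = A.one ⊗ₜ[k] ∑ i ∈ s, A.counit (f₁ i) • A.mul x (f₂ i) := by
        rw [TensorProduct.tmul_sum]
        exact Finset.sum_congr rfl fun i _ => by
          rw [TensorProduct.smul_tmul, TensorProduct.tmul_smul]
    _ = A.one ⊗ₜ[k] A.mul x (A.bmap g) := by
        congr 1
        calc ∑ i ∈ s, A.counit (f₁ i) • A.mul x (f₂ i)
            = ∑ i ∈ s, A.mul x (A.counit (f₁ i) • f₂ i) := by
              refine Finset.sum_congr rfl fun i _ => ?_
              rw [map_smul]
          _ = A.mul x (∑ i ∈ s, A.counit (f₁ i) • f₂ i) := (map_sum _ _ _).symm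
          _ = A.mul x (A.bmap g) := by rw [counit_left_sum k A g s f₁ f₂ hrep]

lemma step2 (hβ : βe.toLinearMap = A.bmap) (g : H₀) {ι : Type} (s : Finset ι)
    (f₁ f₂ : ι → H₀) (hrep : A.comul g = ∑ i ∈ s, f₁ i ⊗ₜ[k] f₂ i) :
    ∑ i ∈ s, mul2 k A (sop k A (f₁ i)) (A.comul (f₂ i))
      = A.counit g • (A.one ⊗ₜ[k] A.one) := by
  classical
  choose F hF using fun y : H₀ => TensorProduct.exists_finset (A.comul y)
  set βi := βe.symm.toLinearMap with hβidef
  set Ψ : (H₀ ⊗[k] H₀) →ₗ[k] (H₀ ⊗[k] H₀) →ₗ[k] (H₀ ⊗[k] H₀) :=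
    (mul2 k A) ∘ₗ ((TensorProduct.comm k H₀ H₀).toLinearMap ∘ₗ
      TensorProduct.map A.S A.S) with hΨdef
  have map_dd : ∀ t : H₀ ⊗[k] H₀, TensorProduct.map A.comul A.comul t
      = TensorProduct.map LinearMap.id A.comul (TensorProduct.map A.comul LinearMap.id t) := by
    intro t
    induction t with
    | zero => simp
    | tmul a b => simp
    | add u v hu hv => simp [map_add, hu, hv]
  have harg : TensorProduct.map A.comul A.comul (A.comul g)
      = TensorProduct.map LinearMap.id A.comul
          (TensorProduct.map LinearMap.id βi
            ((TensorProduct.assoc k H₀ H₀ H₀).symm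
              (TensorProduct.map A.bmap A.comul (A.comul g)))) := by
    rw [map_dd, map_comul_id_eq k A hβ g]
  have h2 : TensorProduct.map A.bmap A.comul (A.comul g)
      = ∑ i ∈ s, ∑ q ∈ F (f₂ i), A.bmap (f₁ i) ⊗ₜ[k] (q.1 ⊗ₜ[k] q.2) := by
    rw [hrep, map_sum]
    refine Finset.sum_congr rfl fun i _ => ?_
    rw [TensorProduct.map_tmul, hF (f₂ i), TensorProduct.tmul_sum]
  have hL : ∑ i ∈ s, mul2 k A (sop k A (f₁ i)) (A.comul (f₂ i))
      = TensorProduct.lift Ψ (TensorProduct.map A.comul A.comul (A.comul g)) := by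
    rw [hrep, map_sum (TensorProduct.map A.comul A.comul) _ s,
      map_sum (TensorProduct.lift Ψ) _ s]
    refine Finset.sum_congr rfl fun i _ => ?_
    rw [TensorProduct.map_tmul, TensorProduct.lift.tmul]
    rfl
  have harg2 : TensorProduct.map LinearMap.id A.comul
      (TensorProduct.map LinearMap.id βi
        ((TensorProduct.assoc k H₀ H₀ H₀).symm
          (TensorProduct.map A.bmap A.comul (A.comul g))))
      = ∑ i ∈ s, ∑ q ∈ F (f₂ i),
          (A.bmap (f₁ i) ⊗ₜ[k] q.1) ⊗ₜ[k]
            TensorProduct.map βi βi (A.comul q.2) := by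
    rw [h2]
    simp only [map_sum]
    refine Finset.sum_congr rfl fun i _ => Finset.sum_congr rfl fun q _ => ?_
    rw [TensorProduct.assoc_symm_tmul, TensorProduct.map_tmul, TensorProduct.map_tmul]
    simp only [LinearMap.id_coe, id_eq, hβidef, LinearEquiv.coe_coe]
    rw [comul_symm k A hβ]
  have e5 : ∀ (i : ι) (q : H₀ × H₀),
      TensorProduct.lift Ψ ((A.bmap (f₁ i) ⊗ₜ[k] q.1) ⊗ₜ[k]
          TensorProduct.map βi βi (A.comul q.2))
        = mul2 k A (A.S q.1 ⊗ₜ[k] A.S (A.bmap (f₁ i)))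
            (TensorProduct.map βi βi (A.comul q.2)) := by
    intro i q
    rw [TensorProduct.lift.tmul, hΨdef]
    simp only [LinearMap.coe_comp, Function.comp_apply, LinearEquiv.coe_coe,
      TensorProduct.map_tmul, TensorProduct.comm_tmul]
  have hfin : ∑ i ∈ s, ∑ q ∈ F (f₂ i),
      TensorProduct.lift Ψ ((A.bmap (f₁ i) ⊗ₜ[k] q.1) ⊗ₜ[k]
          TensorProduct.map βi βi (A.comul q.2))
      = A.counit g • (A.one ⊗ₜ[k] A.one) := by
    calc ∑ i ∈ s, ∑ q ∈ F (f₂ i),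
        TensorProduct.lift Ψ ((A.bmap (f₁ i) ⊗ₜ[k] q.1) ⊗ₜ[k]
            TensorProduct.map βi βi (A.comul q.2))
        = ∑ i ∈ s, ∑ q ∈ F (f₂ i), mul2 k A (A.S q.1 ⊗ₜ[k] A.S (A.bmap (f₁ i)))
            (TensorProduct.map βi βi (A.comul q.2)) :=
          Finset.sum_congr rfl fun i _ => Finset.sum_congr rfl fun q _ => e5 i q
      _ = ∑ i ∈ s, A.one ⊗ₜ[k] A.mul (A.S (A.bmap (f₁ i))) (A.bmap (f₂ i)) :=
          Finset.sum_congr rfl fun i _ =>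
            step2aux k A hβ (A.S (A.bmap (f₁ i))) (f₂ i) (F (f₂ i)) _ _ (hF (f₂ i))
      _ = A.one ⊗ₜ[k] A.bmap (∑ i ∈ s, A.mul (A.S (f₁ i)) (f₂ i)) := by
          rw [map_sum, TensorProduct.tmul_sum]
          refine Finset.sum_congr rfl fun i _ => ?_
          rw [A.S_bmap, ← A.bmap_mul]
      _ = A.counit g • (A.one ⊗ₜ[k] A.one) := by
          rw [S_mul_id_sum k A g s f₁ f₂ hrep, map_smul, A.bmap_one,
            TensorProduct.tmul_smul]
  rw [hL, harg, harg2]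
  simpa only [map_sum] using hfin

end MainId
section AntiComul

variable {H₀ : Type} [AddCommGroup H₀] [Module k H₀]
variable (A : Hopf k H₀) {βe Se : H₀ ≃ₗ[k] H₀}

lemma comul_S (hβ : βe.toLinearMap = A.bmap) (x : H₀) :
    A.comul (A.S x) = sop k A x := by
  classical
  choose F hF using fun y : H₀ => TensorProduct.exists_finset (A.comul y)
  set βi := βe.symm.toLinearMap with hβidef
  have inj : Function.Injective
      (TensorProduct.map A.bmap A.bmap : H₀ ⊗[k] H₀ →ₗ[k] H₀ ⊗[k] H₀) := by
    intro a b hab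
    have := congrArg (TensorProduct.map βi βi) hab
    simp only [hβidef] at this
    rwa [map_symm_symm_bmap k A hβ, map_symm_symm_bmap k A hβ] at this
  set Z := ∑ p ∈ F x, mul2 k A (sop k A (A.bmap (A.bmap p.1)))
      (∑ q ∈ F p.2, mul2 k A (A.comul q.1) (A.comul (A.S q.2))) with hZ
  have ev1 : Z = TensorProduct.map A.bmap A.bmap (TensorProduct.map A.bmap A.bmap
      (TensorProduct.map A.bmap A.bmap (TensorProduct.map A.bmap A.bmap (sop k A x)))) := by
    calc Z = ∑ p ∈ F x, A.counit p.2 •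
          TensorProduct.map A.bmap A.bmap (sop k A (A.bmap (A.bmap p.1))) := by
          refine Finset.sum_congr rfl fun p _ => ?_
          rw [step1 k A p.2 (F p.2) _ _ (hF p.2), map_smul, mul2_one_right]
      _ = TensorProduct.map A.bmap A.bmap
            (sop k A (A.bmap (A.bmap (∑ p ∈ F x, A.counit p.2 • p.1)))) := by
          simp [map_sum, map_smul]
      _ = TensorProduct.map A.bmap A.bmap (sop k A (A.bmap (A.bmap (A.bmap x)))) := by
          rw [counit_right_sum k A x (F x) _ _ (hF x)]
      _ = TensorProduct.map A.bmap A.bmap (TensorProduct.map A.bmap A.bmap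
            (TensorProduct.map A.bmap A.bmap (TensorProduct.map A.bmap A.bmap
              (sop k A x)))) := by
          rw [sop_bmap, sop_bmap, sop_bmap]
  set Ξ : H₀ ⊗[k] (H₀ ⊗[k] H₀) →ₗ[k] H₀ ⊗[k] H₀ :=
    TensorProduct.lift (mul2 k A) ∘ₗ
      TensorProduct.map
        (TensorProduct.lift (mul2 k A) ∘ₗ TensorProduct.map (sop k A ∘ₗ A.bmap) A.comul)
        ((TensorProduct.map A.bmap A.bmap) ∘ₗ A.comul ∘ₗ A.S) ∘ₗ
      (TensorProduct.assoc k H₀ H₀ H₀).symm.toLinearMap with hΞdef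
  have hΞ : ∀ a b c : H₀, Ξ (a ⊗ₜ[k] (b ⊗ₜ[k] c))
      = mul2 k A (mul2 k A (sop k A (A.bmap a)) (A.comul b))
          (TensorProduct.map A.bmap A.bmap (A.comul (A.S c))) := by
    intro a b c
    simp [hΞdef, TensorProduct.assoc_symm_tmul]
  have hz : Z = Ξ (TensorProduct.map LinearMap.id A.comul (A.comul x)) := by
    rw [hZ, hF x, map_sum, map_sum]
    refine Finset.sum_congr rfl fun p _ => ?_
    rw [TensorProduct.map_tmul]
    simp only [LinearMap.id_coe, id_eq]
    rw [hF p.2, TensorProduct.tmul_sum, map_sum Ξ,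
      map_sum (mul2 k A (sop k A (A.bmap (A.bmap p.1))))]
    refine Finset.sum_congr rfl fun q _ => ?_
    rw [hΞ, sop_bmap, mul2_hom_assoc]
  have h3 : TensorProduct.map A.comul A.bmap (A.comul x)
      = ∑ p ∈ F x, ∑ r ∈ F p.1, (r.1 ⊗ₜ[k] r.2) ⊗ₜ[k] A.bmap p.2 := by
    rw [hF x, map_sum]
    refine Finset.sum_congr rfl fun p _ => ?_
    rw [TensorProduct.map_tmul, hF p.1, TensorProduct.sum_tmul]
  have harg : TensorProduct.map LinearMap.id A.comul (A.comul x)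
      = ∑ p ∈ F x, ∑ r ∈ F p.1, βi r.1 ⊗ₜ[k] (r.2 ⊗ₜ[k] A.bmap p.2) := by
    rw [map_id_comul_eq k A hβ x, h3]
    simp [map_sum, TensorProduct.assoc_tmul, hβidef]
  have ev2 : Z = TensorProduct.map A.bmap A.bmap (TensorProduct.map A.bmap A.bmap
      (TensorProduct.map A.bmap A.bmap (TensorProduct.map A.bmap A.bmap
        (A.comul (A.S x))))) := by
    calc Z = ∑ p ∈ F x, ∑ r ∈ F p.1, Ξ (βi r.1 ⊗ₜ[k] (r.2 ⊗ₜ[k] A.bmap p.2)) := by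
          rw [hz, harg]
          simp only [map_sum]
      _ = ∑ p ∈ F x, ∑ r ∈ F p.1,
          mul2 k A (mul2 k A (sop k A r.1) (A.comul r.2))
            (TensorProduct.map A.bmap A.bmap (A.comul (A.S (A.bmap p.2)))) := by
          refine Finset.sum_congr rfl fun p _ => Finset.sum_congr rfl fun r _ => ?_
          rw [hΞ]
          have hbr : A.bmap (βi r.1) = r.1 := by
            simp only [hβidef, LinearEquiv.coe_coe]
            exact bmap_symm k A hβ r.1
          rw [hbr]
      _ = ∑ p ∈ F x, A.counit p.1 •
          TensorProduct.map A.bmap A.bmap (TensorProduct.map A.bmap A.bmap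
            (A.comul (A.S (A.bmap p.2)))) := by
          refine Finset.sum_congr rfl fun p _ => ?_
          have hsum : (∑ r ∈ F p.1, mul2 k A (mul2 k A (sop k A r.1) (A.comul r.2)))
              (TensorProduct.map A.bmap A.bmap (A.comul (A.S (A.bmap p.2))))
              = ∑ r ∈ F p.1, mul2 k A (mul2 k A (sop k A r.1) (A.comul r.2))
                  (TensorProduct.map A.bmap A.bmap (A.comul (A.S (A.bmap p.2)))) :=
            LinearMap.sum_apply _ _ _
          rw [← hsum, ← map_sum (mul2 k A), step2 k A hβ p.1 (F p.1) _ _ (hF p.1),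
            map_smul, LinearMap.smul_apply, mul2_one_left]
      _ = TensorProduct.map A.bmap A.bmap (TensorProduct.map A.bmap A.bmap
            (A.comul (A.S (A.bmap (A.bmap x))))) := by
          have : ∑ p ∈ F x, A.counit p.1 •
              TensorProduct.map A.bmap A.bmap (TensorProduct.map A.bmap A.bmap
                (A.comul (A.S (A.bmap p.2))))
              = TensorProduct.map A.bmap A.bmap (TensorProduct.map A.bmap A.bmap
                  (A.comul (A.S (A.bmap (∑ p ∈ F x, A.counit p.1 • p.2))))) := by
            simp [map_sum, map_smul]
          rw [this, counit_left_sum k A x (F x) _ _ (hF x)]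
      _ = TensorProduct.map A.bmap A.bmap (TensorProduct.map A.bmap A.bmap
            (TensorProduct.map A.bmap A.bmap (TensorProduct.map A.bmap A.bmap
              (A.comul (A.S x))))) := by
          rw [A.S_bmap, A.S_bmap, A.comul_bmap, A.comul_bmap]
  exact (inj (inj (inj (inj (ev1.symm.trans ev2))))).symm

lemma inv_antipode_right (hβ : βe.toLinearMap = A.bmap) (hS : Se.toLinearMap = A.S)
    (g : H₀) {ι : Type} (s : Finset ι) (f₁ f₂ : ι → H₀)
    (hrep : A.comul g = ∑ i ∈ s, f₁ i ⊗ₜ[k] f₂ i) :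
    ∑ i ∈ s, A.mul (f₂ i) (Se.symm (f₁ i)) = A.counit g • A.one := by
  obtain ⟨t, ht⟩ := TensorProduct.exists_finset (A.comul (Se.symm g))
  have hg : A.S (Se.symm g) = g := by rw [← hS]; exact Se.apply_symm_apply g
  have hSinvS : ∀ y : H₀, Se.symm (A.S y) = y := by
    intro y; rw [← hS]; exact Se.symm_apply_apply y
  have hΔg : A.comul g = ∑ r ∈ t, A.S r.2 ⊗ₜ[k] A.S r.1 := by
    rw [← hg, comul_S k A hβ (Se.symm g), sop_apply, ht]
    simp [map_sum]
  set φ : H₀ →ₗ[k] H₀ →ₗ[k] H₀ := (A.mul).flip ∘ₗ Se.symm.toLinearMap with hφdef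
  have h1 : ∑ i ∈ s, A.mul (f₂ i) (Se.symm (f₁ i))
      = TensorProduct.lift φ (A.comul g) := by
    rw [hrep, map_sum]
    refine Finset.sum_congr rfl fun i _ => ?_
    simp [hφdef]
  have h2 : TensorProduct.lift φ (A.comul g)
      = ∑ r ∈ t, A.mul (A.S r.1) r.2 := by
    rw [hΔg, map_sum]
    refine Finset.sum_congr rfl fun r _ => ?_
    simp [hφdef, hSinvS]
  rw [h1, h2, S_mul_id_sum k A (Se.symm g) t _ _ ht]
  congr 1
  rw [← hg, counit_S k A hβ, hSinvS]

lemma inv_antipode_left (hβ : βe.toLinearMap = A.bmap) (hS : Se.toLinearMap = A.S)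
    (g : H₀) {ι : Type} (s : Finset ι) (f₁ f₂ : ι → H₀)
    (hrep : A.comul g = ∑ i ∈ s, f₁ i ⊗ₜ[k] f₂ i) :
    ∑ i ∈ s, A.mul (Se.symm (f₂ i)) (f₁ i) = A.counit g • A.one := by
  obtain ⟨t, ht⟩ := TensorProduct.exists_finset (A.comul (Se.symm g))
  have hg : A.S (Se.symm g) = g := by rw [← hS]; exact Se.apply_symm_apply g
  have hSinvS : ∀ y : H₀, Se.symm (A.S y) = y := by
    intro y; rw [← hS]; exact Se.symm_apply_apply y
  have hΔg : A.comul g = ∑ r ∈ t, A.S r.2 ⊗ₜ[k] A.S r.1 := by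
    rw [← hg, comul_S k A hβ (Se.symm g), sop_apply, ht]
    simp [map_sum]
  set φ : H₀ →ₗ[k] H₀ →ₗ[k] H₀ := (A.mul ∘ₗ Se.symm.toLinearMap).flip with hφdef
  have h1 : ∑ i ∈ s, A.mul (Se.symm (f₂ i)) (f₁ i)
      = TensorProduct.lift φ (A.comul g) := by
    rw [hrep, map_sum]
    refine Finset.sum_congr rfl fun i _ => ?_
    simp [hφdef]
  have h2 : TensorProduct.lift φ (A.comul g)
      = ∑ r ∈ t, A.mul r.1 (A.S r.2) := by
    rw [hΔg, map_sum]
    refine Finset.sum_congr rfl fun r _ => ?_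
    simp [hφdef, hSinvS]
  rw [h1, h2, id_mul_S_sum k A (Se.symm g) t _ _ ht]
  congr 1
  rw [← hg, counit_S k A hβ, hSinvS]

end AntiComul
section Braiding

variable (A : Hopf k H) {βe Se : H ≃ₗ[k] H}

lemma ract_zinv (hβ : βe.toLinearMap = A.bmap) {ζe : V ≃ₗ[k] V}
    (ract : V →ₗ[k] H →ₗ[k] V) (hm : IsRMod k A.toBialg ζe.toLinearMap ract)
    (m : V) (a : H) :
    ζe.symm (ract m a) = ract (ζe.symm m) (βe.symm a) := by
  have h := hm.zeta_act (ζe.symm m) (βe.symm a)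
  simp only [LinearEquiv.coe_coe] at h
  rw [bmap_symm k A hβ, LinearEquiv.apply_symm_apply] at h
  rw [← h, LinearEquiv.symm_apply_apply]

lemma coact_zinv (hβ : βe.toLinearMap = A.bmap) {ζe : W ≃ₗ[k] W}
    (ρ : W →ₗ[k] W ⊗[k] H) (hc : IsRCom k A.toBialg ζe.toLinearMap ρ) (w : W) :
    ρ (ζe.symm w) = TensorProduct.map ζe.symm.toLinearMap βe.symm.toLinearMap (ρ w) := by
  have h := hc.coact_zeta (ζe.symm w)
  simp only [LinearEquiv.coe_coe] at h
  rw [LinearEquiv.apply_symm_apply] at h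
  have cancel : ∀ t : W ⊗[k] H,
      TensorProduct.map ζe.symm.toLinearMap βe.symm.toLinearMap
        (TensorProduct.map ζe.toLinearMap A.bmap t) = t := by
    intro t
    induction t with
    | zero => simp
    | tmul a b => simp [symm_bmap k A hβ]
    | add x y hx hy => simp [map_add, hx, hy]
  rw [h, cancel]

lemma coact_counit_sum {ζe : W ≃ₗ[k] W} (ρ : W →ₗ[k] W ⊗[k] H)
    (hc : IsRCom k A.toBialg ζe.toLinearMap ρ) (w : W) {ι : Type} (s : Finset ι)
    (f : ι → W) (g : ι → H) (hrep : ρ w = ∑ i ∈ s, f i ⊗ₜ[k] g i) :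
    ∑ i ∈ s, A.counit (g i) • f i = ζe w := by
  have h := hc.coact_counit w
  rw [hrep] at h
  simp only [LinearEquiv.coe_coe] at h ⊢
  simpa using h

lemma comul_binv4_rep (hβ : βe.toLinearMap = A.bmap) (h : H) {ι : Type} (t : Finset ι)
    (a b : ι → H) (hrep : A.comul h = ∑ i ∈ t, a i ⊗ₜ[k] b i) :
    A.comul (βe.symm (βe.symm (βe.symm (βe.symm h))))
      = ∑ i ∈ t, (βe.symm (βe.symm (βe.symm (βe.symm (a i)))))
          ⊗ₜ[k] (βe.symm (βe.symm (βe.symm (βe.symm (b i))))) := by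
  rw [comul_symm k A hβ, comul_symm k A hβ, comul_symm k A hβ, comul_symm k A hβ, hrep]
  simp [map_sum]

lemma braid_tmul (ract : V →ₗ[k] H →ₗ[k] V) (ζVi : V →ₗ[k] V) (ρ : W →ₗ[k] W ⊗[k] H)
    (ζWi : W →ₗ[k] W) (βi : H →ₗ[k] H) (v : V) (w : W) {ι : Type} (s : Finset ι)
    (f : ι → W) (g : ι → H) (hrep : ρ w = ∑ i ∈ s, f i ⊗ₜ[k] g i) :
    braid k ract ζVi ρ ζWi βi (v ⊗ₜ[k] w)
      = ∑ i ∈ s, ζWi (f i) ⊗ₜ[k] ract (ζVi v) (βi (βi (g i))) := by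
  unfold braid
  simp only [LinearMap.coe_comp, Function.comp_apply, TensorProduct.map_tmul,
    LinearMap.id_coe, id_eq, LinearEquiv.coe_coe]
  rw [hrep]
  simp [map_sum, TensorProduct.tmul_sum, TensorProduct.leftComm_tmul]

lemma braidInv_tmul (ract : V →ₗ[k] H →ₗ[k] V) (ζVi : V →ₗ[k] V) (ρ : W →ₗ[k] W ⊗[k] H)
    (ζWi : W →ₗ[k] W) (βi Si : H →ₗ[k] H) (v : V) (w : W) {ι : Type} (s : Finset ι)
    (f : ι → W) (g : ι → H) (hrep : ρ w = ∑ i ∈ s, f i ⊗ₜ[k] g i) :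
    braidInv k ract ζVi ρ ζWi βi Si (w ⊗ₜ[k] v)
      = ∑ i ∈ s, ract (ζVi v) (Si (βi (βi (g i)))) ⊗ₜ[k] ζWi (f i) := by
  unfold braidInv
  simp only [LinearMap.coe_comp, Function.comp_apply, TensorProduct.map_tmul,
    LinearMap.id_coe, id_eq, LinearEquiv.coe_coe]
  rw [hrep]
  simp [map_sum, TensorProduct.sum_tmul, TensorProduct.assoc_tmul]

lemma braid_left_inv (hβ : βe.toLinearMap = A.bmap) (hS : Se.toLinearMap = A.S)
    (ζVe : V ≃ₗ[k] V) (ractV : V →ₗ[k] H →ₗ[k] V)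
    (ζWe : W ≃ₗ[k] W) (ρW : W →ₗ[k] W ⊗[k] H)
    (hVm : IsRMod k A.toBialg ζVe.toLinearMap ractV)
    (hWc : IsRCom k A.toBialg ζWe.toLinearMap ρW) (v : V) (w : W) :
    braidInv k ractV ζVe.symm.toLinearMap ρW ζWe.symm.toLinearMap βe.symm.toLinearMap
      Se.symm.toLinearMap (braid k ractV ζVe.symm.toLinearMap ρW ζWe.symm.toLinearMap
        βe.symm.toLinearMap (v ⊗ₜ[k] w)) = v ⊗ₜ[k] w := by
  classical
  choose FW hFW using fun y : W => TensorProduct.exists_finset (ρW y)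
  choose FH hFH using fun y : H => TensorProduct.exists_finset (A.comul y)
  obtain ⟨s, hsrep⟩ := TensorProduct.exists_finset (ρW w)
  set ψ : H →ₗ[k] H →ₗ[k] V := LinearMap.mk₂ k
    (fun h' h'' => ractV (ractV (ζVe.symm (ζVe.symm v))
        (βe.symm (βe.symm (βe.symm (βe.symm h'')))))
      (Se.symm (βe.symm (βe.symm (βe.symm h')))))
    (fun a b h'' => by simp [map_add])
    (fun c a h'' => by simp [map_smul])
    (fun h' a b => by simp [map_add])
    (fun c h' a => by simp [map_smul]) with hψdef
  have hψ : ∀ h' h'' : H, ψ h' h''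
      = ractV (ractV (ζVe.symm (ζVe.symm v))
            (βe.symm (βe.symm (βe.symm (βe.symm h'')))))
          (Se.symm (βe.symm (βe.symm (βe.symm h')))) := fun _ _ => rfl
  set Λc : (W ⊗[k] H) ⊗[k] H →ₗ[k] V ⊗[k] W :=
    (TensorProduct.map (TensorProduct.lift ψ)
        (ζWe.symm.toLinearMap ∘ₗ ζWe.symm.toLinearMap)) ∘ₗ
      (TensorProduct.comm k W (H ⊗[k] H)).toLinearMap ∘ₗ
        (TensorProduct.assoc k W H H).toLinearMap with hΛdef
  have hΛ : ∀ (w' : W) (h' h'' : H), Λc ((w' ⊗ₜ[k] h') ⊗ₜ[k] h'')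
      = ψ h' h'' ⊗ₜ[k] ζWe.symm (ζWe.symm w') := by
    intro w' h' h''
    simp [hΛdef, TensorProduct.assoc_tmul]
  have hrep2 : ∀ p : W × H, ρW (ζWe.symm p.1)
      = ∑ q ∈ FW p.1, ζWe.symm q.1 ⊗ₜ[k] βe.symm q.2 := by
    intro p
    rw [coact_zinv k A hβ ρW hWc p.1, hFW p.1, map_sum]
    simp
  have stepA : braidInv k ractV ζVe.symm.toLinearMap ρW ζWe.symm.toLinearMap
      βe.symm.toLinearMap Se.symm.toLinearMap
      (braid k ractV ζVe.symm.toLinearMap ρW ζWe.symm.toLinearMap βe.symm.toLinearMap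
        (v ⊗ₜ[k] w))
      = Λc (TensorProduct.map ρW A.bmap (ρW w)) := by
    rw [braid_tmul k ractV ζVe.symm.toLinearMap ρW ζWe.symm.toLinearMap
      βe.symm.toLinearMap v w s _ _ hsrep, map_sum]
    rw [hsrep, map_sum (TensorProduct.map ρW A.bmap) _ s, map_sum Λc _ s]
    refine Finset.sum_congr rfl fun p _ => ?_
    simp only [LinearEquiv.coe_coe]
    rw [braidInv_tmul k ractV ζVe.symm.toLinearMap ρW ζWe.symm.toLinearMap
      βe.symm.toLinearMap Se.symm.toLinearMap _ _ (FW p.1) _ _ (hrep2 p)]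
    rw [TensorProduct.map_tmul, hFW p.1, TensorProduct.sum_tmul, map_sum Λc]
    refine Finset.sum_congr rfl fun q _ => ?_
    rw [hΛ, hψ]
    simp only [LinearEquiv.coe_coe]
    rw [ract_zinv k A hβ ractV hVm, symm_bmap k A hβ]
  have stepC : (TensorProduct.assoc k W H H).symm
      (TensorProduct.map ζWe.toLinearMap A.comul (ρW w))
      = ∑ p ∈ s, ∑ r ∈ FH p.2, (ζWe p.1 ⊗ₜ[k] r.1) ⊗ₜ[k] r.2 := by
    rw [hsrep, map_sum, map_sum]
    refine Finset.sum_congr rfl fun p _ => ?_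
    rw [TensorProduct.map_tmul, hFH p.2, TensorProduct.tmul_sum, map_sum]
    simp
  have hmodassoc : ∀ r : H × H,
      ractV (ractV (ζVe.symm (ζVe.symm v))
          (βe.symm (βe.symm (βe.symm (βe.symm r.2)))))
        (Se.symm (βe.symm (βe.symm (βe.symm r.1))))
      = ractV (ζVe.symm v)
          (A.mul (βe.symm (βe.symm (βe.symm (βe.symm r.2))))
            (Se.symm (βe.symm (βe.symm (βe.symm (βe.symm r.1)))))) := by
    intro r
    have hb : Se.symm (βe.symm (βe.symm (βe.symm r.1)))
        = A.bmap (Se.symm (βe.symm (βe.symm (βe.symm (βe.symm r.1))))) := by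
      rw [← Sinv_bmap k A hβ hS, bmap_symm k A hβ]
    rw [hb]
    have h2 := hVm.assoc (ζVe.symm (ζVe.symm v))
      (βe.symm (βe.symm (βe.symm (βe.symm r.2))))
      (Se.symm (βe.symm (βe.symm (βe.symm (βe.symm r.1)))))
    simp only [LinearEquiv.coe_coe] at h2
    rw [h2, LinearEquiv.apply_symm_apply]
  have hsum : ∀ p : W × H,
      ∑ r ∈ FH p.2, A.mul (βe.symm (βe.symm (βe.symm (βe.symm r.2))))
          (Se.symm (βe.symm (βe.symm (βe.symm (βe.symm r.1)))))
        = A.counit p.2 • A.one := by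
    intro p
    have hrep4 := comul_binv4_rep k A hβ p.2 (FH p.2) _ _ (hFH p.2)
    have := inv_antipode_right k A hβ hS
      (βe.symm (βe.symm (βe.symm (βe.symm p.2)))) (FH p.2)
      (fun r => βe.symm (βe.symm (βe.symm (βe.symm r.1))))
      (fun r => βe.symm (βe.symm (βe.symm (βe.symm r.2)))) hrep4
    rw [this, counit_symm k A hβ, counit_symm k A hβ, counit_symm k A hβ,
      counit_symm k A hβ]
  rw [stepA, hWc.coassoc w, stepC, map_sum Λc _ s]
  calc ∑ p ∈ s, Λc (∑ r ∈ FH p.2, (ζWe p.1 ⊗ₜ[k] r.1) ⊗ₜ[k] r.2)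
      = ∑ p ∈ s, ∑ r ∈ FH p.2, ψ r.1 r.2 ⊗ₜ[k] ζWe.symm p.1 := by
        refine Finset.sum_congr rfl fun p _ => ?_
        rw [map_sum Λc]
        refine Finset.sum_congr rfl fun r _ => ?_
        rw [hΛ, LinearEquiv.symm_apply_apply]
    _ = ∑ p ∈ s, (ractV (ζVe.symm v)
          (∑ r ∈ FH p.2, A.mul (βe.symm (βe.symm (βe.symm (βe.symm r.2))))
            (Se.symm (βe.symm (βe.symm (βe.symm (βe.symm r.1)))))))
          ⊗ₜ[k] ζWe.symm p.1 := by
        refine Finset.sum_congr rfl fun p _ => ?_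
        rw [map_sum (ractV (ζVe.symm v)), TensorProduct.sum_tmul]
        refine Finset.sum_congr rfl fun r _ => ?_
        rw [hψ, hmodassoc]
    _ = ∑ p ∈ s, (A.counit p.2 • v) ⊗ₜ[k] ζWe.symm p.1 := by
        refine Finset.sum_congr rfl fun p _ => ?_
        rw [hsum p, map_smul, hVm.act_one]
        simp only [LinearEquiv.coe_coe, LinearEquiv.apply_symm_apply]
    _ = v ⊗ₜ[k] ζWe.symm (∑ p ∈ s, A.counit p.2 • p.1) := by
        rw [map_sum, TensorProduct.tmul_sum]
        refine Finset.sum_congr rfl fun p _ => ?_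
        rw [map_smul, TensorProduct.smul_tmul, TensorProduct.tmul_smul]
    _ = v ⊗ₜ[k] w := by
        rw [coact_counit_sum k A ρW hWc w s _ _ hsrep, LinearEquiv.symm_apply_apply]

lemma braid_right_inv (hβ : βe.toLinearMap = A.bmap) (hS : Se.toLinearMap = A.S)
    (ζVe : V ≃ₗ[k] V) (ractV : V →ₗ[k] H →ₗ[k] V)
    (ζWe : W ≃ₗ[k] W) (ρW : W →ₗ[k] W ⊗[k] H)
    (hVm : IsRMod k A.toBialg ζVe.toLinearMap ractV)
    (hWc : IsRCom k A.toBialg ζWe.toLinearMap ρW) (v : V) (w : W) :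
    braid k ractV ζVe.symm.toLinearMap ρW ζWe.symm.toLinearMap βe.symm.toLinearMap
      (braidInv k ractV ζVe.symm.toLinearMap ρW ζWe.symm.toLinearMap βe.symm.toLinearMap
        Se.symm.toLinearMap (w ⊗ₜ[k] v)) = w ⊗ₜ[k] v := by
  classical
  choose FW hFW using fun y : W => TensorProduct.exists_finset (ρW y)
  choose FH hFH using fun y : H => TensorProduct.exists_finset (A.comul y)
  obtain ⟨s, hsrep⟩ := TensorProduct.exists_finset (ρW w)
  set ψ : H →ₗ[k] H →ₗ[k] V := LinearMap.mk₂ k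
    (fun h' h'' => ractV (ractV (ζVe.symm (ζVe.symm v))
        (Se.symm (βe.symm (βe.symm (βe.symm (βe.symm h''))))))
      (βe.symm (βe.symm (βe.symm h'))))
    (fun a b h'' => by simp [map_add])
    (fun c a h'' => by simp [map_smul])
    (fun h' a b => by simp [map_add])
    (fun c h' a => by simp [map_smul]) with hψdef
  have hψ : ∀ h' h'' : H, ψ h' h''
      = ractV (ractV (ζVe.symm (ζVe.symm v))
            (Se.symm (βe.symm (βe.symm (βe.symm (βe.symm h''))))))
          (βe.symm (βe.symm (βe.symm h'))) := fun _ _ => rfl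
  set Λc : (W ⊗[k] H) ⊗[k] H →ₗ[k] W ⊗[k] V :=
    (TensorProduct.map (ζWe.symm.toLinearMap ∘ₗ ζWe.symm.toLinearMap)
        (TensorProduct.lift ψ)) ∘ₗ
      (TensorProduct.assoc k W H H).toLinearMap with hΛdef
  have hΛ : ∀ (w' : W) (h' h'' : H), Λc ((w' ⊗ₜ[k] h') ⊗ₜ[k] h'')
      = ζWe.symm (ζWe.symm w') ⊗ₜ[k] ψ h' h'' := by
    intro w' h' h''
    simp [hΛdef, TensorProduct.assoc_tmul]
  have hrep2 : ∀ p : W × H, ρW (ζWe.symm p.1)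
      = ∑ q ∈ FW p.1, ζWe.symm q.1 ⊗ₜ[k] βe.symm q.2 := by
    intro p
    rw [coact_zinv k A hβ ρW hWc p.1, hFW p.1, map_sum]
    simp
  have stepA : braid k ractV ζVe.symm.toLinearMap ρW ζWe.symm.toLinearMap
      βe.symm.toLinearMap
      (braidInv k ractV ζVe.symm.toLinearMap ρW ζWe.symm.toLinearMap βe.symm.toLinearMap
        Se.symm.toLinearMap (w ⊗ₜ[k] v))
      = Λc (TensorProduct.map ρW A.bmap (ρW w)) := by
    rw [braidInv_tmul k ractV ζVe.symm.toLinearMap ρW ζWe.symm.toLinearMap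
      βe.symm.toLinearMap Se.symm.toLinearMap v w s _ _ hsrep, map_sum]
    rw [hsrep, map_sum (TensorProduct.map ρW A.bmap) _ s, map_sum Λc _ s]
    refine Finset.sum_congr rfl fun p _ => ?_
    simp only [LinearEquiv.coe_coe]
    rw [braid_tmul k ractV ζVe.symm.toLinearMap ρW ζWe.symm.toLinearMap
      βe.symm.toLinearMap _ _ (FW p.1) _ _ (hrep2 p)]
    rw [TensorProduct.map_tmul, hFW p.1, TensorProduct.sum_tmul, map_sum Λc]
    refine Finset.sum_congr rfl fun q _ => ?_
    rw [hΛ, hψ]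
    simp only [LinearEquiv.coe_coe]
    rw [ract_zinv k A hβ ractV hVm, symm_bmap k A hβ, ← Sinv_binv k A hβ hS]
  have stepC : (TensorProduct.assoc k W H H).symm
      (TensorProduct.map ζWe.toLinearMap A.comul (ρW w))
      = ∑ p ∈ s, ∑ r ∈ FH p.2, (ζWe p.1 ⊗ₜ[k] r.1) ⊗ₜ[k] r.2 := by
    rw [hsrep, map_sum, map_sum]
    refine Finset.sum_congr rfl fun p _ => ?_
    rw [TensorProduct.map_tmul, hFH p.2, TensorProduct.tmul_sum, map_sum]
    simp
  have hmodassoc : ∀ r : H × H,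
      ractV (ractV (ζVe.symm (ζVe.symm v))
          (Se.symm (βe.symm (βe.symm (βe.symm (βe.symm r.2))))))
        (βe.symm (βe.symm (βe.symm r.1)))
      = ractV (ζVe.symm v)
          (A.mul (Se.symm (βe.symm (βe.symm (βe.symm (βe.symm r.2)))))
            (βe.symm (βe.symm (βe.symm (βe.symm r.1))))) := by
    intro r
    have hb : βe.symm (βe.symm (βe.symm r.1))
        = A.bmap (βe.symm (βe.symm (βe.symm (βe.symm r.1)))) := by
      rw [bmap_symm k A hβ]
    rw [hb]
    have h2 := hVm.assoc (ζVe.symm (ζVe.symm v))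
      (Se.symm (βe.symm (βe.symm (βe.symm (βe.symm r.2)))))
      (βe.symm (βe.symm (βe.symm (βe.symm r.1))))
    simp only [LinearEquiv.coe_coe] at h2
    rw [h2, LinearEquiv.apply_symm_apply, symm_bmap k A hβ]
  have hsum : ∀ p : W × H,
      ∑ r ∈ FH p.2, A.mul (Se.symm (βe.symm (βe.symm (βe.symm (βe.symm r.2)))))
          (βe.symm (βe.symm (βe.symm (βe.symm r.1))))
        = A.counit p.2 • A.one := by
    intro p
    have hrep4 := comul_binv4_rep k A hβ p.2 (FH p.2) _ _ (hFH p.2)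
    have := inv_antipode_left k A hβ hS
      (βe.symm (βe.symm (βe.symm (βe.symm p.2)))) (FH p.2)
      (fun r => βe.symm (βe.symm (βe.symm (βe.symm r.1))))
      (fun r => βe.symm (βe.symm (βe.symm (βe.symm r.2)))) hrep4
    rw [this, counit_symm k A hβ, counit_symm k A hβ, counit_symm k A hβ,
      counit_symm k A hβ]
  rw [stepA, hWc.coassoc w, stepC, map_sum Λc _ s]
  calc ∑ p ∈ s, Λc (∑ r ∈ FH p.2, (ζWe p.1 ⊗ₜ[k] r.1) ⊗ₜ[k] r.2)
      = ∑ p ∈ s, ∑ r ∈ FH p.2, ζWe.symm p.1 ⊗ₜ[k] ψ r.1 r.2 := by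
        refine Finset.sum_congr rfl fun p _ => ?_
        rw [map_sum Λc]
        refine Finset.sum_congr rfl fun r _ => ?_
        rw [hΛ, LinearEquiv.symm_apply_apply]
    _ = ∑ p ∈ s, ζWe.symm p.1 ⊗ₜ[k] (ractV (ζVe.symm v)
          (∑ r ∈ FH p.2, A.mul (Se.symm (βe.symm (βe.symm (βe.symm (βe.symm r.2)))))
            (βe.symm (βe.symm (βe.symm (βe.symm r.1)))))) := by
        refine Finset.sum_congr rfl fun p _ => ?_
        rw [map_sum (ractV (ζVe.symm v)), TensorProduct.tmul_sum]
        refine Finset.sum_congr rfl fun r _ => ?_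
        rw [hψ, hmodassoc]
    _ = ∑ p ∈ s, ζWe.symm p.1 ⊗ₜ[k] (A.counit p.2 • v) := by
        refine Finset.sum_congr rfl fun p _ => ?_
        rw [hsum p, map_smul, hVm.act_one]
        simp only [LinearEquiv.coe_coe, LinearEquiv.apply_symm_apply]
    _ = ζWe.symm (∑ p ∈ s, A.counit p.2 • p.1) ⊗ₜ[k] v := by
        rw [map_sum, TensorProduct.sum_tmul]
        refine Finset.sum_congr rfl fun p _ => ?_
        rw [map_smul]
        exact (TensorProduct.smul_tmul _ _ _).symm
    _ = w ⊗ₜ[k] v := by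
        rw [coact_counit_sum k A ρW hWc w s _ _ hsrep, LinearEquiv.symm_apply_apply]

end Braiding
/-- the braiding `c_{V,W}` is bijective with the stated inverse. -/
theorem braid_bijective (H : Type) [AddCommGroup H] [Module k H]
    (A : Hopf k H) (βe : H ≃ₗ[k] H) (hβ : βe.toLinearMap = A.bmap)
    (Se : H ≃ₗ[k] H) (hS : Se.toLinearMap = A.S)
    (V W : Type) [AddCommGroup V] [Module k V] [AddCommGroup W] [Module k W]
    (ζVe : V ≃ₗ[k] V) (ractV : V →ₗ[k] H →ₗ[k] V) (ρV : V →ₗ[k] V ⊗[k] H)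
    (ζWe : W ≃ₗ[k] W) (ractW : W →ₗ[k] H →ₗ[k] W) (ρW : W →ₗ[k] W ⊗[k] H)
    (hV : IsYD k A ζVe.toLinearMap ractV ρV) (hW : IsYD k A ζWe.toLinearMap ractW ρW) :
    (∀ x : V ⊗[k] W,
        braidInv k ractV ζVe.symm.toLinearMap ρW ζWe.symm.toLinearMap
            βe.symm.toLinearMap Se.symm.toLinearMap
          (braid k ractV ζVe.symm.toLinearMap ρW ζWe.symm.toLinearMap
            βe.symm.toLinearMap x) = x) ∧
    (∀ y : W ⊗[k] V,
        braid k ractV ζVe.symm.toLinearMap ρW ζWe.symm.toLinearMap βe.symm.toLinearMap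
          (braidInv k ractV ζVe.symm.toLinearMap ρW ζWe.symm.toLinearMap
            βe.symm.toLinearMap Se.symm.toLinearMap y) = y) := by
  constructor
  · intro x
    induction x using TensorProduct.induction_on with
    | zero => simp
    | tmul v w => exact braid_left_inv k A hβ hS ζVe ractV ζWe ρW hV.rmod hW.rcom v w
    | add a b ha hb => rw [map_add, map_add, ha, hb]
  · intro y
    induction y using TensorProduct.induction_on with
    | zero => simp
    | tmul w v => exact braid_right_inv k A hβ hS ζVe ractV ζWe ρW hV.rmod hW.rcom v w
    | add a b ha hb => rw [map_add, map_add, ha, hb]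

end HomHopf
end

section
/- Let (H, β) be a Hom-Hopf algebra and U, V, W right-right Yetter-Drinfel'd modules with bijective structure maps. Then the hexagon identity c_{U,V⊗W} = (V ⊗ c_{U,W}) ∘ (c_{U,V} ⊗ W) holds (identifying (U⊗V)⊗W ≅ U⊗(V⊗W)), where c_{X,Y}(x ⊗ y) = ζ_Y^{-1}(y_{(0)}) ⊗ ζ_X^{-1}(x) ◁ β^{-2}(y_{(1)}) and the tensor product of YD-modules carries action (v⊗w)◁h = v◁β^{-1}(h_1) ⊗ w◁β^{-1}(h_2) and coaction ρ(v⊗w) = v_{(0)} ⊗ w_{(0)} ⊗ β^{-1}(v_{(1)}w_{(1)}). -/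
open TensorProduct

namespace HomHopf

variable (k : Type) [Field k]

variable {H : Type} [AddCommGroup H] [Module k H]
variable {M N P V W U : Type}
  [AddCommGroup M] [Module k M] [AddCommGroup N] [Module k N]
  [AddCommGroup P] [Module k P] [AddCommGroup V] [Module k V]
  [AddCommGroup W] [Module k W] [AddCommGroup U] [Module k U]

/-- the hexagon identity
`c_{U,V⊗W} = (V ⊗ c_{U,W}) ∘ (c_{U,V} ⊗ W)` (up to the obvious associativity
identifications) for right-right Yetter–Drinfel'd modules. -/
theorem braid_hexagon (H : Type) [AddCommGroup H] [Module k H]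
    (A : Hopf k H) (βe : H ≃ₗ[k] H) (hβ : βe.toLinearMap = A.bmap)
    (U V W : Type) [AddCommGroup U] [Module k U] [AddCommGroup V] [Module k V]
    [AddCommGroup W] [Module k W]
    (ζUe : U ≃ₗ[k] U) (ractU : U →ₗ[k] H →ₗ[k] U) (ρU : U →ₗ[k] U ⊗[k] H)
    (ζVe : V ≃ₗ[k] V) (ractV : V →ₗ[k] H →ₗ[k] V) (ρV : V →ₗ[k] V ⊗[k] H)
    (ζWe : W ≃ₗ[k] W) (ractW : W →ₗ[k] H →ₗ[k] W) (ρW : W →ₗ[k] W ⊗[k] H)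
    (hU : IsYD k A ζUe.toLinearMap ractU ρU)
    (hV : IsYD k A ζVe.toLinearMap ractV ρV)
    (hW : IsYD k A ζWe.toLinearMap ractW ρW) :
    (TensorProduct.assoc k V W U).toLinearMap.comp
        ((braid k ractU ζUe.symm.toLinearMap
            (ydCoact k A.toBialg βe.symm.toLinearMap ρV ρW)
            (TensorProduct.map ζVe.symm.toLinearMap ζWe.symm.toLinearMap)
            βe.symm.toLinearMap).comp
          (TensorProduct.assoc k U V W).toLinearMap)
      = (TensorProduct.map LinearMap.id
            (braid k ractU ζUe.symm.toLinearMap ρW ζWe.symm.toLinearMap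
              βe.symm.toLinearMap)).comp
          ((TensorProduct.assoc k V U W).toLinearMap.comp
            (TensorProduct.map
              (braid k ractU ζUe.symm.toLinearMap ρV ζVe.symm.toLinearMap
                βe.symm.toLinearMap) LinearMap.id)) := by
  -- auxiliary facts
  have hbmapsymm : ∀ b : H, A.bmap (βe.symm b) = b := by
    intro b; rw [← hβ]; simp
  have hmulinv : ∀ a b : H, βe.symm (A.mul a b) = A.mul (βe.symm a) (βe.symm b) := by
    intro a b
    apply βe.injective
    have hb : ∀ x, βe x = A.bmap x := fun x => LinearMap.congr_fun hβ x
    rw [βe.apply_symm_apply, hb, A.bmap_mul, hbmapsymm, hbmapsymm]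
  have hζinv : ∀ (x : U) (b : H),
      ζUe.symm (ractU x b) = ractU (ζUe.symm x) (βe.symm b) := by
    intro x b
    apply ζUe.injective
    rw [ζUe.apply_symm_apply]
    have := hU.rmod.zeta_act (ζUe.symm x) (βe.symm b)
    simp only [LinearEquiv.coe_coe] at this
    rw [this, ζUe.apply_symm_apply, hbmapsymm]
  have key : ∀ (u : U) (a b : H),
      ractU (ζUe.symm u) (βe.symm (βe.symm (βe.symm (A.mul a b))))
        = ractU (ζUe.symm (ractU (ζUe.symm u) (βe.symm (βe.symm a))))
            (βe.symm (βe.symm b)) := by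
    intro u a b
    rw [hζinv]
    have h1 : βe.symm (βe.symm b) = A.bmap (βe.symm (βe.symm (βe.symm b))) :=
      (hbmapsymm _).symm
    rw [h1, hU.rmod.assoc, hmulinv, hmulinv, hmulinv]
    simp only [LinearEquiv.coe_coe, LinearEquiv.apply_symm_apply]
  apply TensorProduct.ext_threefold
  intro u v w
  simp only [braid, ydCoact, LinearMap.coe_comp, Function.comp_apply,
    LinearEquiv.coe_coe, TensorProduct.assoc_tmul, TensorProduct.map_tmul,
    LinearMap.id_coe, id_eq]
  generalize ρV v = p
  induction p using TensorProduct.induction_on with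
  | zero => simp
  | add p1 p2 ih1 ih2 =>
    simp only [map_add, TensorProduct.add_tmul, TensorProduct.tmul_add, ih1, ih2]
  | tmul v0 v1 =>
    simp only [TensorProduct.map_tmul, TensorProduct.leftComm_tmul,
      TensorProduct.lift.tmul, LinearMap.coe_comp, Function.comp_apply,
      LinearMap.id_coe, id_eq, LinearEquiv.coe_coe, TensorProduct.assoc_tmul]
    generalize ρW w = q
    induction q using TensorProduct.induction_on with
    | zero => simp
    | add q1 q2 ih1 ih2 =>
      simp only [map_add, TensorProduct.add_tmul, TensorProduct.tmul_add, ih1, ih2]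
    | tmul w0 w1 =>
      simp only [TensorProduct.map_tmul, TensorProduct.tensorTensorTensorComm_tmul,
        TensorProduct.leftComm_tmul, TensorProduct.lift.tmul, LinearMap.coe_comp,
        Function.comp_apply, LinearMap.id_coe, id_eq, LinearEquiv.coe_coe,
        TensorProduct.assoc_tmul]
      rw [key]

end HomHopf
end

section
/- Let (A, ζ_A) and (B, ζ_B) be Hom-algebras with ζ_A, ζ_B bijective, V a linear space with ζ_V : V → V bijective, and endow A ⊗ V with left A-module structure m_A ⊗ ζ_V. Then right B-module structures μ on A ⊗ V making (A ⊗ V, ζ_A ⊗ ζ_V) an (A,B)-bimodule are in bijection with linear maps f : V ⊗ B → A ⊗ V satisfying (i) (m_A ⊗ ζ_V)(A ⊗ f)(A ⊗ ζ_V^{-1} ⊗ B)(f ⊗ B) = f(ζ_V ⊗ m_B), (ii) f(V ⊗ η_B) = η_A ⊗ ζ_V, (iii) f(ζ_V^{-1} ⊗ ζ_B^{-1}) = (ζ_A^{-1} ⊗ ζ_V^{-1})f; the bijection sends μ to f = μ(η_A ⊗ V ⊗ B) and f to μ = (m_A ⊗ ζ_V)(A ⊗ f)(A ⊗ ζ_V^{-1}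 ⊗ ζ_B^{-1}). -/
open TensorProduct

namespace HomHopf

variable (k : Type) [Field k]

variable {H : Type} [AddCommGroup H] [Module k H]
variable {M N P V W U : Type}
  [AddCommGroup M] [Module k M] [AddCommGroup N] [Module k N]
  [AddCommGroup P] [Module k P] [AddCommGroup V] [Module k V]
  [AddCommGroup W] [Module k W] [AddCommGroup U] [Module k U]

/-- The left `A`-module structure `m_A ⊗ ζ_V` on `A ⊗ V`. -/
noncomputable def lactAV {AA VV : Type} [AddCommGroup AA] [Module k AA]
    [AddCommGroup VV] [Module k VV]
    (mulA : AA →ₗ[k] AA →ₗ[k] AA) (ζV : VV →ₗ[k] VV) :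
    AA →ₗ[k] (AA ⊗[k] VV) →ₗ[k] (AA ⊗[k] VV) :=
  ((TensorProduct.mapBilinear (RingHom.id k) AA VV AA VV).flip ζV).comp mulA

/-- `f = μ ∘ (η_A ⊗ V ⊗ B)`. -/
noncomputable def fOf {AA BB VV : Type} [AddCommGroup AA] [Module k AA]
    [AddCommGroup BB] [Module k BB] [AddCommGroup VV] [Module k VV]
    (oneA : AA) (μ : (AA ⊗[k] VV) →ₗ[k] BB →ₗ[k] (AA ⊗[k] VV)) :
    VV ⊗[k] BB →ₗ[k] AA ⊗[k] VV :=
  TensorProduct.lift (μ.comp (TensorProduct.mk k AA VV oneA))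

/-- `μ = (m_A ⊗ ζ_V)(A ⊗ f)(A ⊗ ζ_V⁻¹ ⊗ ζ_B⁻¹)`. -/
noncomputable def muOf {AA BB VV : Type} [AddCommGroup AA] [Module k AA]
    [AddCommGroup BB] [Module k BB] [AddCommGroup VV] [Module k VV]
    (mulA : AA →ₗ[k] AA →ₗ[k] AA) (ζV ζVinv : VV →ₗ[k] VV) (ζBinv : BB →ₗ[k] BB)
    (f : VV ⊗[k] BB →ₗ[k] AA ⊗[k] VV) :
    (AA ⊗[k] VV) →ₗ[k] BB →ₗ[k] (AA ⊗[k] VV) :=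
  TensorProduct.curry
    ((TensorProduct.map (TensorProduct.lift mulA) ζV).comp
      ((TensorProduct.assoc k AA AA VV).symm.toLinearMap.comp
        ((TensorProduct.map LinearMap.id f).comp
          ((TensorProduct.map LinearMap.id (TensorProduct.map ζVinv ζBinv)).comp
            (TensorProduct.assoc k AA VV BB).toLinearMap))))

/-- Condition (i) of Theorem 4.1. -/
def condI {AA BB VV : Type} [AddCommGroup AA] [Module k AA]
    [AddCommGroup BB] [Module k BB] [AddCommGroup VV] [Module k VV]
    (mulA : AA →ₗ[k] AA →ₗ[k] AA) (mulB : BB →ₗ[k] BB →ₗ[k] BB)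
    (ζV ζVinv : VV →ₗ[k] VV) (f : VV ⊗[k] BB →ₗ[k] AA ⊗[k] VV) : Prop :=
  (TensorProduct.map (TensorProduct.lift mulA) ζV).comp
      ((TensorProduct.assoc k AA AA VV).symm.toLinearMap.comp
        ((TensorProduct.map LinearMap.id f).comp
          ((TensorProduct.map LinearMap.id (TensorProduct.map ζVinv LinearMap.id)).comp
            ((TensorProduct.assoc k AA VV BB).toLinearMap.comp
              (TensorProduct.map f LinearMap.id)))))
    = f.comp ((TensorProduct.map ζV (TensorProduct.lift mulB)).comp
        (TensorProduct.assoc k VV BB BB).toLinearMap)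

/-!
By the bimodule condition, `(a ⊗ v) · b = (ζ_A⁻¹ a · (1 ⊗ ζ_V⁻¹ v)) · ζ_B (ζ_B⁻¹ b)
= a · ((1 ⊗ ζ_V⁻¹ v) · ζ_B⁻¹ b)`, so `μ` is determined by `f = μ (1 ⊗ - ⊗ -)`.
Conversely, for `μ` built from `f` by this formula, the bimodule condition follows from
Hom-associativity of `A` and (iii); given it, Hom-associativity, unitality and `ζ`-equivariance
of `μ` reduce to their restrictions to `1 ⊗ V ⊗ B`, which are (i), (ii) and (iii).
-/

section

variable {k} {AA BB VV : Type} [AddCommGroup AA] [Module k AA] [AddCommGroup BB] [Module k BB]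
  [AddCommGroup VV] [Module k VV]

@[simp]
lemma lactAV_tmul (mulA : AA →ₗ[k] AA →ₗ[k] AA) (ζV : VV →ₗ[k] VV) (a a' : AA) (v : VV) :
    lactAV k mulA ζV a (a' ⊗ₜ[k] v) = mulA a a' ⊗ₜ[k] ζV v :=
  rfl

@[simp]
lemma fOf_tmul (oneA : AA) (μ : (AA ⊗[k] VV) →ₗ[k] BB →ₗ[k] (AA ⊗[k] VV)) (v : VV) (b : BB) :
    fOf k oneA μ (v ⊗ₜ[k] b) = μ (oneA ⊗ₜ[k] v) b :=
  rfl

lemma map_lift_assoc_symm_tmul (mulA : AA →ₗ[k] AA →ₗ[k] AA) (ζV : VV →ₗ[k] VV)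
    (a : AA) (y : AA ⊗[k] VV) :
    map (lift mulA) ζV ((TensorProduct.assoc k AA AA VV).symm (a ⊗ₜ[k] y))
      = lactAV k mulA ζV a y := by
  induction y using TensorProduct.induction_on with
  | zero => simp
  | tmul a' v => rfl
  | add x y hx hy => simp only [tmul_add, map_add, hx, hy]

@[simp]
lemma muOf_tmul (mulA : AA →ₗ[k] AA →ₗ[k] AA) (ζV ζVinv : VV →ₗ[k] VV)
    (ζBinv : BB →ₗ[k] BB) (f : VV ⊗[k] BB →ₗ[k] AA ⊗[k] VV) (a : AA) (v : VV) (b : BB) :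
    muOf k mulA ζV ζVinv ζBinv f (a ⊗ₜ[k] v) b
      = lactAV k mulA ζV a (f (ζVinv v ⊗ₜ[k] ζBinv b)) := by
  simp [muOf, map_lift_assoc_symm_tmul]

lemma muOf_apply_eq_muOf_id (mulA : AA →ₗ[k] AA →ₗ[k] AA) (ζV ζVinv : VV →ₗ[k] VV)
    (ζBinv : BB →ₗ[k] BB) (f : VV ⊗[k] BB →ₗ[k] AA ⊗[k] VV) (x : AA ⊗[k] VV) (b : BB) :
    muOf k mulA ζV ζVinv ζBinv f x b = muOf k mulA ζV ζVinv LinearMap.id f x (ζBinv b) := by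
  induction x using TensorProduct.induction_on with
  | zero => simp
  | tmul a v => simp
  | add x y hx hy => simp only [map_add, LinearMap.add_apply, hx, hy]

lemma condI_iff (mulA : AA →ₗ[k] AA →ₗ[k] AA) (mulB : BB →ₗ[k] BB →ₗ[k] BB)
    (ζV ζVinv : VV →ₗ[k] VV) (f : VV ⊗[k] BB →ₗ[k] AA ⊗[k] VV) :
    condI k mulA mulB ζV ζVinv f ↔
      ∀ v b b', muOf k mulA ζV ζVinv LinearMap.id f (f (v ⊗ₜ[k] b)) b'
        = f (ζV v ⊗ₜ[k] mulB b b') := by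
  unfold condI
  constructor
  · intro h v b b'
    simpa [muOf] using LinearMap.congr_fun h ((v ⊗ₜ[k] b) ⊗ₜ[k] b')
  · intro h
    apply TensorProduct.ext_threefold
    intro v b b'
    simpa [muOf] using h v b b'

lemma comp_map_symm_eq_map_symm_comp_iff {M N P Q : Type} [AddCommGroup M] [Module k M]
    [AddCommGroup N] [Module k N] [AddCommGroup P] [Module k P] [AddCommGroup Q] [Module k Q]
    (eM : M ≃ₗ[k] M) (eN : N ≃ₗ[k] N) (eP : P ≃ₗ[k] P) (eQ : Q ≃ₗ[k] Q)
    (g : M ⊗[k] N →ₗ[k] P ⊗[k] Q) :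
    g.comp (map eM.symm.toLinearMap eN.symm.toLinearMap)
        = (map eP.symm.toLinearMap eQ.symm.toLinearMap).comp g ↔
      (map eP.toLinearMap eQ.toLinearMap).comp g = g.comp (map eM.toLinearMap eN.toLinearMap) := by
  change g.comp (congr eM eN).symm.toLinearMap = (congr eP eQ).symm.toLinearMap.comp g ↔
    (congr eP eQ).toLinearMap.comp g = g.comp (congr eM eN).toLinearMap
  rw [LinearEquiv.comp_toLinearMap_symm_eq, LinearMap.comp_assoc,
    LinearEquiv.eq_toLinearMap_symm_comp]

variable (A : HomAlg k AA) (B : HomAlg k BB)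

lemma lactAV_one (ζV : VV →ₗ[k] VV) (y : AA ⊗[k] VV) :
    lactAV k A.mul ζV A.one y = map A.zmap ζV y := by
  induction y using TensorProduct.induction_on with
  | zero => simp
  | tmul a v => simp [A.one_mul]
  | add x y hx hy => simp only [map_add, hx, hy]

lemma map_zmap_lactAV (ζV : VV →ₗ[k] VV) (a : AA) (y : AA ⊗[k] VV) :
    map A.zmap ζV (lactAV k A.mul ζV a y) = lactAV k A.mul ζV (A.zmap a) (map A.zmap ζV y) := by
  induction y using TensorProduct.induction_on with
  | zero => simp
  | tmul a' v => simp [A.zmap_mul]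
  | add x y hx hy => simp only [map_add, hx, hy]

lemma lactAV_zmap_lactAV (ζV : VV →ₗ[k] VV) (a a' : AA) (y : AA ⊗[k] VV) :
    lactAV k A.mul ζV (A.zmap a) (lactAV k A.mul ζV a' y)
      = lactAV k A.mul ζV (A.mul a a') (map A.zmap ζV y) := by
  induction y using TensorProduct.induction_on with
  | zero => simp
  | tmul a'' v => simp [A.hom_assoc]
  | add x y hx hy => simp only [map_add, hx, hy]

lemma HomAlg.symm_one {e : AA ≃ₗ[k] AA} (he : e.toLinearMap = A.zmap) :
    e.symm A.one = A.one := by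
  rw [e.symm_apply_eq, ← LinearEquiv.coe_coe, he, A.zmap_one]

lemma HomAlg.symm_mul {e : AA ≃ₗ[k] AA} (he : e.toLinearMap = A.zmap) (a b : AA) :
    e.symm (A.mul a b) = A.mul (e.symm a) (e.symm b) := by
  rw [e.symm_apply_eq, ← LinearEquiv.coe_coe, he, A.zmap_mul, ← he]
  simp

def IsBimoduleCompat (ζV : VV →ₗ[k] VV) (μ : (AA ⊗[k] VV) →ₗ[k] BB →ₗ[k] (AA ⊗[k] VV)) :
    Prop :=
  ∀ a x b, lactAV k A.mul ζV (A.zmap a) (μ x b) = μ (lactAV k A.mul ζV a x) (B.zmap b)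

section FromAction

variable {μ : (AA ⊗[k] VV) →ₗ[k] BB →ₗ[k] (AA ⊗[k] VV)}

lemma fOf_tmul_one {ζV : VV →ₗ[k] VV} (hm : IsRModOf k B.mul B.one B.zmap (map A.zmap ζV) μ)
    (v : VV) : fOf k A.one μ (v ⊗ₜ[k] B.one) = A.one ⊗ₜ[k] ζV v := by
  rw [fOf_tmul, hm.act_one, map_tmul, A.zmap_one]

lemma map_comp_fOf {ζV : VV →ₗ[k] VV} (hm : IsRModOf k B.mul B.one B.zmap (map A.zmap ζV) μ) :
    (map A.zmap ζV).comp (fOf k A.one μ) = (fOf k A.one μ).comp (map ζV B.zmap) := by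
  ext v b
  simp [hm.zeta_act, A.zmap_one]

lemma apply_zmap_tmul_zmap {ζV : VV →ₗ[k] VV} (hc : IsBimoduleCompat A B ζV μ)
    (a : AA) (v : VV) (b : BB) :
    μ (A.zmap a ⊗ₜ[k] ζV v) (B.zmap b)
      = lactAV k A.mul ζV (A.zmap a) (fOf k A.one μ (v ⊗ₜ[k] b)) := by
  rw [fOf_tmul, hc, lactAV_tmul, A.mul_one]

lemma eq_muOf_fOf {ζAe : AA ≃ₗ[k] AA} (hA : ζAe.toLinearMap = A.zmap)
    {ζBe : BB ≃ₗ[k] BB} (hB : ζBe.toLinearMap = B.zmap) {ζVe : VV ≃ₗ[k] VV}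
    (hc : IsBimoduleCompat A B ζVe.toLinearMap μ) :
    μ = muOf k A.mul ζVe.toLinearMap ζVe.symm.toLinearMap ζBe.symm.toLinearMap
      (fOf k A.one μ) := by
  refine LinearMap.ext fun x => LinearMap.ext fun b => ?_
  induction x using TensorProduct.induction_on with
  | zero => simp
  | tmul a v =>
    have key := apply_zmap_tmul_zmap A B hc (ζAe.symm a) (ζVe.symm v) (ζBe.symm b)
    rw [← hA, ← hB] at key
    simpa using key
  | add x y hx hy => simp only [map_add, LinearMap.add_apply, hx, hy]

lemma condI_fOf {ζBe : BB ≃ₗ[k] BB} (hB : ζBe.toLinearMap = B.zmap) {ζVe : VV ≃ₗ[k] VV}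
    (hm : IsRModOf k B.mul B.one B.zmap (map A.zmap ζVe.toLinearMap) μ)
    (hμ : μ = muOf k A.mul ζVe.toLinearMap ζVe.symm.toLinearMap ζBe.symm.toLinearMap
      (fOf k A.one μ)) :
    condI k A.mul B.mul ζVe.toLinearMap ζVe.symm.toLinearMap (fOf k A.one μ) := by
  rw [condI_iff]
  intro v b b'
  have hμ' : ∀ y, muOf k A.mul ζVe.toLinearMap ζVe.symm.toLinearMap LinearMap.id
      (fOf k A.one μ) y b' = μ y (B.zmap b') := by
    intro y
    conv_rhs => rw [hμ, muOf_apply_eq_muOf_id, ← hB]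
    simp
  rw [hμ', fOf_tmul, fOf_tmul, hm.assoc, map_tmul, A.zmap_one]

end FromAction

section FromMap

variable {ζBe : BB ≃ₗ[k] BB} {ζVe : VV ≃ₗ[k] VV} {f : VV ⊗[k] BB →ₗ[k] AA ⊗[k] VV}

lemma map_apply_symm_tmul (hB : ζBe.toLinearMap = B.zmap)
    (hf : (map A.zmap ζVe.toLinearMap).comp f = f.comp (map ζVe.toLinearMap B.zmap))
    (v : VV) (b : BB) :
    map A.zmap ζVe.toLinearMap (f (ζVe.symm v ⊗ₜ[k] ζBe.symm b)) = f (v ⊗ₜ[k] b) := by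
  have h := LinearMap.congr_fun hf (ζVe.symm v ⊗ₜ[k] ζBe.symm b)
  rw [← hB] at h
  simpa using h

lemma isBimoduleCompat_muOf (hB : ζBe.toLinearMap = B.zmap)
    (hf : (map A.zmap ζVe.toLinearMap).comp f = f.comp (map ζVe.toLinearMap B.zmap)) :
    IsBimoduleCompat A B ζVe.toLinearMap
      (muOf k A.mul ζVe.toLinearMap ζVe.symm.toLinearMap ζBe.symm.toLinearMap f) := by
  intro c y b
  induction y using TensorProduct.induction_on with
  | zero => simp
  | tmul a v =>
    rw [muOf_tmul, lactAV_zmap_lactAV, LinearEquiv.coe_coe, LinearEquiv.coe_coe,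
      map_apply_symm_tmul A B hB hf, lactAV_tmul, muOf_tmul, ← hB]
    simp
  | add x y hx hy => simp only [map_add, LinearMap.add_apply, hx, hy]

lemma isRModOf_muOf (hB : ζBe.toLinearMap = B.zmap)
    (hI : condI k A.mul B.mul ζVe.toLinearMap ζVe.symm.toLinearMap f)
    (hone : ∀ v, f (v ⊗ₜ[k] B.one) = A.one ⊗ₜ[k] ζVe v)
    (hf : (map A.zmap ζVe.toLinearMap).comp f = f.comp (map ζVe.toLinearMap B.zmap)) :
    IsRModOf k B.mul B.one B.zmap (map A.zmap ζVe.toLinearMap)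
      (muOf k A.mul ζVe.toLinearMap ζVe.symm.toLinearMap ζBe.symm.toLinearMap f) := by
  have hB' : ∀ b, ζBe.symm (B.zmap b) = b := fun b => by simp [← hB]
  constructor
  case assoc =>
    intro x a b
    induction x using TensorProduct.induction_on with
    | zero => simp
    | tmul a₀ v =>
      rw [muOf_tmul, ← isBimoduleCompat_muOf A B hB hf, muOf_apply_eq_muOf_id,
        (condI_iff ..).1 hI]
      simp [HomAlg.symm_mul B hB]
    | add x y hx hy => simp only [map_add, LinearMap.add_apply, hx, hy]
  case zeta_act =>
    intro x b
    induction x using TensorProduct.induction_on with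
    | zero => simp
    | tmul a v =>
      rw [muOf_tmul, map_zmap_lactAV, LinearEquiv.coe_coe, LinearEquiv.coe_coe,
        map_apply_symm_tmul A B hB hf]
      simp [hB']
    | add x y hx hy => simp only [map_add, LinearMap.add_apply, hx, hy]
  case act_one =>
    intro x
    induction x using TensorProduct.induction_on with
    | zero => simp
    | tmul a v => simp [HomAlg.symm_one B hB, hone, A.mul_one]
    | add x y hx hy => simp only [map_add, LinearMap.add_apply, hx, hy]

lemma fOf_muOf (hB : ζBe.toLinearMap = B.zmap)
    (hf : (map A.zmap ζVe.toLinearMap).comp f = f.comp (map ζVe.toLinearMap B.zmap)) :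
    fOf k A.one (muOf k A.mul ζVe.toLinearMap ζVe.symm.toLinearMap ζBe.symm.toLinearMap f)
      = f := by
  ext v b
  simp [lactAV_one, map_apply_symm_tmul A B hB hf]

end FromMap

end

/-- bijection between right `B`-module structures making `A ⊗ V` an
`(A,B)`-bimodule and maps `f : V ⊗ B → A ⊗ V` satisfying (i), (ii), (iii). -/
theorem bimodule_structures_biject
    (AA BB VV : Type) [AddCommGroup AA] [Module k AA] [AddCommGroup BB] [Module k BB]
    [AddCommGroup VV] [Module k VV]
    (A' : HomAlg k AA) (B' : HomAlg k BB)
    (ζAe : AA ≃ₗ[k] AA) (hA : ζAe.toLinearMap = A'.zmap)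
    (ζBe : BB ≃ₗ[k] BB) (hB : ζBe.toLinearMap = B'.zmap)
    (ζVe : VV ≃ₗ[k] VV) :
    (∀ μ : (AA ⊗[k] VV) →ₗ[k] BB →ₗ[k] (AA ⊗[k] VV),
      IsRModOf k B'.mul B'.one B'.zmap (TensorProduct.map A'.zmap ζVe.toLinearMap) μ →
      (∀ (a : AA) (x : AA ⊗[k] VV) (b : BB),
        lactAV k A'.mul ζVe.toLinearMap (A'.zmap a) (μ x b)
          = μ (lactAV k A'.mul ζVe.toLinearMap a x) (B'.zmap b)) →
      (condI k A'.mul B'.mul ζVe.toLinearMap ζVe.symm.toLinearMap (fOf k A'.one μ) ∧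
       (∀ v : VV, fOf k A'.one μ (v ⊗ₜ[k] B'.one) = A'.one ⊗ₜ[k] ζVe.toLinearMap v) ∧
       (fOf k A'.one μ).comp
           (TensorProduct.map ζVe.symm.toLinearMap ζBe.symm.toLinearMap)
         = (TensorProduct.map ζAe.symm.toLinearMap ζVe.symm.toLinearMap).comp
             (fOf k A'.one μ)) ∧
      μ = muOf k A'.mul ζVe.toLinearMap ζVe.symm.toLinearMap ζBe.symm.toLinearMap
            (fOf k A'.one μ)) ∧
    (∀ f : VV ⊗[k] BB →ₗ[k] AA ⊗[k] VV,
      condI k A'.mul B'.mul ζVe.toLinearMap ζVe.symm.toLinearMap f →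
      (∀ v : VV, f (v ⊗ₜ[k] B'.one) = A'.one ⊗ₜ[k] ζVe.toLinearMap v) →
      f.comp (TensorProduct.map ζVe.symm.toLinearMap ζBe.symm.toLinearMap)
        = (TensorProduct.map ζAe.symm.toLinearMap ζVe.symm.toLinearMap).comp f →
      (IsRModOf k B'.mul B'.one B'.zmap (TensorProduct.map A'.zmap ζVe.toLinearMap)
          (muOf k A'.mul ζVe.toLinearMap ζVe.symm.toLinearMap ζBe.symm.toLinearMap f) ∧
       (∀ (a : AA) (x : AA ⊗[k] VV) (b : BB),
         lactAV k A'.mul ζVe.toLinearMap (A'.zmap a)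
             (muOf k A'.mul ζVe.toLinearMap ζVe.symm.toLinearMap ζBe.symm.toLinearMap f x b)
           = muOf k A'.mul ζVe.toLinearMap ζVe.symm.toLinearMap ζBe.symm.toLinearMap f
               (lactAV k A'.mul ζVe.toLinearMap a x) (B'.zmap b))) ∧
      f = fOf k A'.one
            (muOf k A'.mul ζVe.toLinearMap ζVe.symm.toLinearMap ζBe.symm.toLinearMap f)) := by
  refine ⟨fun μ hm hc => ?_, fun f hI hone hζ => ?_⟩
  · have hμ := eq_muOf_fOf A' B' hA hB hc
    refine ⟨⟨condI_fOf A' B' hB hm hμ, fOf_tmul_one A' B' hm, ?_⟩, hμ⟩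
    rw [comp_map_symm_eq_map_symm_comp_iff, hA, hB]
    exact map_comp_fOf A' B' hm
  · rw [comp_map_symm_eq_map_symm_comp_iff, hA, hB] at hζ
    exact ⟨⟨isRModOf_muOf A' B' hB hI hone hζ, isBimoduleCompat_muOf A' B' hB hζ⟩,
      (fOf_muOf A' B' hB hζ).symm⟩

end HomHopf
end

section
/- Let (H, β) be a Hom-Hopf algebra with β bijective, V a linear space with ζ_V bijective, and suppose (H ⊗ V, β ⊗ ζ_V) with left structures h·(g ⊗ v) = hg ⊗ ζ_V(v), ρ^l(g ⊗ v) = g_1 ⊗ g_2 ⊗ ζ_V(v), right action (g ⊗ v)·h = gβ^{-1}(h_1) ⊗ v ◁ β^{-1}(h_2) and right coaction ρ^r(g ⊗ v) = g_1 ⊗ v_{(0)} ⊗ β^{-1}(g_2 v_{(1)}) (coming from a right H-module and right H-comodule structure on V) is a four-angle H-Hopf module. Then (V, ζ_V, ◁, ρ) is a right-right Yetter-Drinfel'd module. -/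
open TensorProduct

namespace HomHopf

variable (k : Type) [Field k]

variable {H : Type} [AddCommGroup H] [Module k H]
variable {M N P V W U : Type}
  [AddCommGroup M] [Module k M] [AddCommGroup N] [Module k N]
  [AddCommGroup P] [Module k P] [AddCommGroup V] [Module k V]
  [AddCommGroup W] [Module k W] [AddCommGroup U] [Module k U]

/- Apply `ε ⊗ id ⊗ β` (`counitProj`) to the right-right compatibility
`ρʳ((1 ⊗ v) · β(h)) = ρʳ(1 ⊗ v) · Δ(β(h))` of the four-angle Hopf module `H ⊗ V`.
Since `(1 ⊗ v) · β(h) = β(h₁) ⊗ v ◁ h₂` and `ρʳ(1 ⊗ v) = 1 ⊗ v₍₀₎ ⊗ v₍₁₎`, the counit collapses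
the `H`-leg on both sides, leaving `(v ◁ h₂)₍₀₎ ⊗ β²(h₁)(v ◁ h₂)₍₁₎` on the left and
`v₍₀₎ ◁ β(h₁) ⊗ β(v₍₁₎)β²(h₂)` on the right. -/

section YetterDrinfeldFromFourAngle

variable {k} (A : Bialg k H)

def ydLeft (ract : V →ₗ[k] H →ₗ[k] V) (ρ : V →ₗ[k] V ⊗[k] H) (v : V) :
    H ⊗[k] H →ₗ[k] V ⊗[k] H :=
  lift <| LinearMap.mk₂ k
    (fun a b => map LinearMap.id (A.mul (A.bmap (A.bmap a))) (ρ (ract v b)))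
    (by intros; simp only [map_add, LinearMap.add_apply, map_add_right])
    (by intros; simp only [map_smul, LinearMap.smul_apply, map_smul_right])
    (by intros; simp only [map_add])
    (by intros; simp only [map_smul])

def ydRight (ract : V →ₗ[k] H →ₗ[k] V) (ρ : V →ₗ[k] V ⊗[k] H) (v : V) :
    H ⊗[k] H →ₗ[k] V ⊗[k] H :=
  lift <| LinearMap.mk₂ k
    (fun a b => map (ract.flip (A.bmap a)) ((A.mul.flip (A.bmap (A.bmap b))).comp A.bmap) (ρ v))
    (by intros; simp only [map_add, LinearMap.add_apply, map_add_left])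
    (by intros; simp only [map_smul, LinearMap.smul_apply, map_smul_left])
    (by intros; simp only [map_add, LinearMap.add_comp, map_add_right, LinearMap.add_apply])
    (by intros; simp only [map_smul, LinearMap.smul_comp, map_smul_right, LinearMap.smul_apply])

theorem ydCompat_of_comul (ract : V →ₗ[k] H →ₗ[k] V) (ρ : V →ₗ[k] V ⊗[k] H)
    (h : ∀ v x, ydLeft A ract ρ v (A.comul x) = ydRight A ract ρ v (A.comul x)) :
    ydCompat k A ract ρ := by
  intro v x ι s h1 h2 hx
  simpa [hx, ydLeft, ydRight] using h v x

variable (βinv : H →ₗ[k] H)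

def tensorRAct (ract : V →ₗ[k] H →ₗ[k] V) : H ⊗[k] V →ₗ[k] H →ₗ[k] H ⊗[k] V :=
  (map₂ A.mul ract).compl₂ ((map βinv βinv).comp A.comul)

def tensorRCoact (ρ : V →ₗ[k] V ⊗[k] H) : H ⊗[k] V →ₗ[k] (H ⊗[k] V) ⊗[k] H :=
  (map LinearMap.id (βinv.comp (lift A.mul))).comp
    ((tensorTensorTensorComm k H H V H).toLinearMap.comp (map A.comul ρ))

def counitProj : (H ⊗[k] V) ⊗[k] H →ₗ[k] V ⊗[k] H :=
  map ((TensorProduct.lid k V).toLinearMap ∘ₗ map A.counit LinearMap.id) A.bmap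

theorem tensorRAct_bmap (hβinv : ∀ x, βinv (A.bmap x) = x) (ract : V →ₗ[k] H →ₗ[k] V)
    (m : H ⊗[k] V) (x : H) :
    tensorRAct A βinv ract m (A.bmap x) = map₂ A.mul ract m (A.comul x) := by
  have hid : βinv ∘ₗ A.bmap = LinearMap.id := LinearMap.ext hβinv
  rw [tensorRAct, LinearMap.compl₂_apply, LinearMap.comp_apply, A.comul_bmap,
    ← LinearMap.comp_apply (map βinv βinv), ← map_comp, hid, map_id, LinearMap.id_apply]

theorem lid_map_counit_map_mul_one (f : H →ₗ[k] M) (x : H ⊗[k] H) :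
    TensorProduct.lid k M (map A.counit LinearMap.id (map (A.mul A.one) f x))
      = f (TensorProduct.lid k H (map A.counit LinearMap.id x)) := by
  induction x using TensorProduct.induction_on with
  | zero => simp
  | tmul a b => simp [A.one_mul, A.counit_bmap]
  | add x y hx hy => simp only [map_add, hx, hy]

theorem counitProj_map_tensorTensorTensorComm (hβinv : ∀ x, A.bmap (βinv x) = x)
    (x : H ⊗[k] H) (y : V ⊗[k] H) :
    counitProj A (map LinearMap.id (βinv.comp (lift A.mul))
        (tensorTensorTensorComm k H H V H (x ⊗ₜ y)))
      = map LinearMap.id (A.mul (TensorProduct.lid k H (map A.counit LinearMap.id x))) y := by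
  induction x using TensorProduct.induction_on with
  | zero => simp
  | add x x' hx hx' => simp only [add_tmul, map_add, hx, hx', LinearMap.add_apply, map_add_right]
  | tmul a b =>
    induction y using TensorProduct.induction_on with
    | zero => simp
    | add y y' hy hy' => simp only [tmul_add, map_add, hy, hy']
    | tmul p c => simp [counitProj, hβinv, smul_tmul']

theorem counitProj_tensorRCoact_tmul (hβinv : ∀ x, A.bmap (βinv x) = x)
    (ρ : V →ₗ[k] V ⊗[k] H) (g : H) (w : V) :
    counitProj A (tensorRCoact A βinv ρ (g ⊗ₜ w))
      = map LinearMap.id (A.mul (A.bmap g)) (ρ w) := by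
  rw [← A.counit_comul g, ← counitProj_map_tensorTensorTensorComm A βinv hβinv]
  rfl

theorem tensorRCoact_one_tmul (hβinv : ∀ x, βinv (A.bmap x) = x)
    (ρ : V →ₗ[k] V ⊗[k] H) (v : V) :
    tensorRCoact A βinv ρ (A.one ⊗ₜ v) = LinearMap.rTensor H (mk k H V A.one) (ρ v) := by
  simp only [tensorRCoact, LinearMap.comp_apply, LinearEquiv.coe_coe, map_tmul, A.comul_one]
  induction ρ v using TensorProduct.induction_on with
  | zero => simp
  | tmul p c => simp [A.one_mul, hβinv]
  | add y y' hy hy' => simp only [tmul_add, map_add, hy, hy']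

theorem counitProj_tensorRCoact_map₂_one_tmul (hβinv : ∀ x, A.bmap (βinv x) = x)
    (ract : V →ₗ[k] H →ₗ[k] V) (ρ : V →ₗ[k] V ⊗[k] H) (v : V) (x : H ⊗[k] H) :
    counitProj A (tensorRCoact A βinv ρ (map₂ A.mul ract (A.one ⊗ₜ v) x))
      = ydLeft A ract ρ v x := by
  induction x using TensorProduct.induction_on with
  | zero => simp
  | tmul a b =>
    simp [counitProj_tensorRCoact_tmul A βinv hβinv, A.one_mul, ydLeft]
  | add x y hx hy => simp only [map_add, hx, hy]

theorem counitProj_map₂_tensorRAct_one_tmul (hβinv : ∀ x, βinv (A.bmap x) = x)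
    (ract : V →ₗ[k] H →ₗ[k] V) (ρ : V →ₗ[k] V ⊗[k] H) (v : V) (x : H ⊗[k] H) :
    counitProj A (map₂ (tensorRAct A βinv ract) A.mul
        (LinearMap.rTensor H (mk k H V A.one) (ρ v)) (map A.bmap A.bmap x))
      = ydRight A ract ρ v x := by
  induction x using TensorProduct.induction_on with
  | zero => simp
  | add x y hx hy => simp only [map_add, hx, hy]
  | tmul a b =>
    simp only [ydRight, lift.tmul, LinearMap.mk₂_apply, map_tmul]
    induction ρ v using TensorProduct.induction_on with
    | zero => simp
    | add y y' hy hy' => simp only [map_add, LinearMap.add_apply, hy, hy']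
    | tmul p c =>
      simp only [LinearMap.rTensor_tmul, mk_apply, map₂_apply_tmul, counitProj, map_tmul,
        LinearMap.comp_apply, LinearEquiv.coe_coe, tensorRAct_bmap A βinv hβinv,
        lid_map_counit_map_mul_one, A.counit_comul, A.bmap_mul, LinearMap.flip_apply]

end YetterDrinfeldFromFourAngle

/-- conversely, if the induced structures make `H ⊗ V` a four-angle
H-Hopf module, then `V` is a right-right Yetter–Drinfel'd module. -/
theorem fourAngle_gives_yd (H : Type) [AddCommGroup H] [Module k H]
    (A : Hopf k H) (βe : H ≃ₗ[k] H) (hβ : βe.toLinearMap = A.bmap)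
    (V : Type) [AddCommGroup V] [Module k V]
    (ζVe : V ≃ₗ[k] V) (ractV : V →ₗ[k] H →ₗ[k] V) (ρV : V →ₗ[k] V ⊗[k] H)
    (hmod : IsRMod k A.toBialg ζVe.toLinearMap ractV)
    (hcom : IsRCom k A.toBialg ζVe.toLinearMap ρV)
    (hFA : IsFourAngle k A (TensorProduct.map A.bmap ζVe.toLinearMap)
      (((TensorProduct.mapBilinear (σ₁₂ := RingHom.id k) (M := H) (N := V) (M₂ := H) (N₂ := V)).flip ζVe.toLinearMap).comp A.mul)
      ((TensorProduct.map₂ A.mul ractV).compl₂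
        ((TensorProduct.map βe.symm.toLinearMap βe.symm.toLinearMap).comp A.comul))
      ((TensorProduct.assoc k H H V).toLinearMap.comp
        (TensorProduct.map A.comul ζVe.toLinearMap))
      ((TensorProduct.map LinearMap.id
          (βe.symm.toLinearMap.comp (TensorProduct.lift A.mul))).comp
        ((TensorProduct.tensorTensorTensorComm k H H V H).toLinearMap.comp
          (TensorProduct.map A.comul ρV)))) :
    IsYD k A ζVe.toLinearMap ractV ρV := by
  have hβinv_left : ∀ x, βe.symm (A.bmap x) = x := fun x => by simp [← hβ]
  have hβinv_right : ∀ x, A.bmap (βe.symm x) = x := fun x => by simp [← hβ]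
  have hrr : RRcompat k A.toBialg (tensorRAct A.toBialg βe.symm ractV)
      (tensorRCoact A.toBialg βe.symm ρV) := hFA.crr
  refine ⟨hmod, hcom, ydCompat_of_comul A.toBialg ractV ρV fun v h => ?_⟩
  have key := congrArg (counitProj A.toBialg) (hrr (A.one ⊗ₜ v) (A.bmap h))
  rwa [tensorRAct_bmap _ _ hβinv_left,
    counitProj_tensorRCoact_map₂_one_tmul _ _ hβinv_right,
    tensorRCoact_one_tmul _ _ hβinv_left, A.comul_bmap,
    counitProj_map₂_tensorRAct_one_tmul _ _ hβinv_left] at key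

end HomHopf
end
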